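/- arXiv:2211.08455 — 10 statements merged into one kernel-verified Lean document; each statement's English description precedes it below -/
import Mathlib

section
/- Let X be a real Banach space and x = (x_1,…,x_n), y = (y_1,…,y_n) ∈ X_∞^n with x ≠ 0. Then x is Birkhoff-James orthogonal to y if and only if either (1) there exists i with ‖x_i‖ = ‖x‖ and x_i Birkhoff-James orthogonal to y_i, or (2) there exist indices i < j with ‖x_i‖ = ‖x_j‖ = ‖x‖ and norm-one support functionals g_i of x_i and g_j of x_j such that g_i(y_i)·g_j(y_j) < 0. -/
open ENNReal

section aux

variable {X : Type*} [NormedAddCommGroup X] [NormedSpace ℝ X]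

private lemma aux_supp {u v : X} {g : X →L[ℝ] ℝ} (hg1 : ‖g‖ = 1) (hgx : g u = ‖u‖)
    (lam : ℝ) : ‖u‖ + lam * g v ≤ ‖u + lam • v‖ := by
  have h1 : g (u + lam • v) = ‖u‖ + lam * g v := by
    simp [map_add, map_smul, hgx, smul_eq_mul]
  have h2 : g (u + lam • v) ≤ ‖g (u + lam • v)‖ := by
    rw [Real.norm_eq_abs]; exact le_abs_self _
  have h3 := g.le_opNorm (u + lam • v)
  rw [hg1, one_mul] at h3
  linarith

private lemma aux_scale {u v : X} {c s : ℝ} (h : ‖u + c • v‖ < ‖u‖) (hs0 : 0 < s)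
    (hs1 : s ≤ 1) : ‖u + (s * c) • v‖ < ‖u‖ := by
  have he : u + (s * c) • v = (1 - s) • u + s • (u + c • v) := by
    rw [smul_add, ← add_assoc, ← add_smul, smul_smul]
    ring_nf
    rw [one_smul]
  calc ‖u + (s * c) • v‖ = ‖(1 - s) • u + s • (u + c • v)‖ := by rw [he]
    _ ≤ ‖(1 - s) • u‖ + ‖s • (u + c • v)‖ := norm_add_le _ _
    _ = (1 - s) * ‖u‖ + s * ‖u + c • v‖ := by
        rw [norm_smul, norm_smul, Real.norm_eq_abs, Real.norm_eq_abs,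
          abs_of_nonneg (by linarith), abs_of_nonneg hs0.le]
    _ < (1 - s) * ‖u‖ + s * ‖u‖ := by nlinarith
    _ = ‖u‖ := by ring

end aux

/-- Characterization of Birkhoff-James orthogonality in `X_∞^n`. -/
theorem stmt1 {X : Type*} [NormedAddCommGroup X] [NormedSpace ℝ X] [CompleteSpace X]
    {n : ℕ} (x y : PiLp ⊤ (fun _ : Fin n => X)) (hx : x ≠ 0) :
    (∀ lam : ℝ, ‖x + lam • y‖ ≥ ‖x‖) ↔
      ((∃ i : Fin n, ‖x i‖ = ‖x‖ ∧ ∀ lam : ℝ, ‖x i + lam • y i‖ ≥ ‖x i‖) ∨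
       (∃ i j : Fin n, i < j ∧ ‖x i‖ = ‖x‖ ∧ ‖x j‖ = ‖x‖ ∧
        ∃ g h : X →L[ℝ] ℝ, ‖g‖ = 1 ∧ g (x i) = ‖x i‖ ∧ ‖h‖ = 1 ∧ h (x j) = ‖x j‖ ∧
          g (y i) * h (y j) < 0)) := by
  -- basic facts about the sup norm
  have hne : Nonempty (Fin n) := by
    by_contra h
    exact hx (PiLp.ext fun i => absurd ⟨i⟩ h)
  have apply_le : ∀ (z : PiLp ⊤ (fun _ : Fin n => X)) (i : Fin n), ‖z i‖ ≤ ‖z‖ := by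
    intro z i
    rw [PiLp.norm_eq_ciSup]
    exact le_ciSup (f := fun j : Fin n => ‖z j‖) (Finite.bddAbove_range _) i
  have sup_lt : ∀ (z : PiLp ⊤ (fun _ : Fin n => X)) (C : ℝ), (∀ i, ‖z i‖ < C) → ‖z‖ < C := by
    intro z C hC
    obtain ⟨j, hj⟩ := Finite.exists_max (fun i => ‖z i‖)
    have h1 : ‖z‖ ≤ ‖z j‖ := by
      rw [PiLp.norm_eq_ciSup]
      exact ciSup_le (f := fun i : Fin n => ‖z i‖) fun i => hj i
    exact lt_of_le_of_lt h1 (hC j)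
  have happly : ∀ (lam : ℝ) (i : Fin n), (x + lam • y) i = x i + lam • y i := by
    intro lam i; rw [PiLp.add_apply, PiLp.smul_apply]
  have hxpos : (0:ℝ) < ‖x‖ := norm_pos_iff.2 hx
  -- a helper for the backward direction, case (2)
  have one_side : ∀ (i : Fin n) (g : X →L[ℝ] ℝ), ‖x i‖ = ‖x‖ → ‖g‖ = 1 → g (x i) = ‖x i‖ →
      ∀ lam : ℝ, 0 ≤ lam * g (y i) → ‖x‖ ≤ ‖x + lam • y‖ := by
    intro i g hxi hg1 hgx lam hpos
    have h1 := aux_supp hg1 hgx (v := y i) lam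
    have h2 := apply_le (x + lam • y) i
    rw [happly] at h2
    linarith [hxi ▸ h1]
  constructor
  · -- forward direction, by contradiction
    intro horth
    by_contra hno
    push_neg at hno
    obtain ⟨h1, h2⟩ := hno
    -- every maximal coordinate fails BJ-orthogonality
    have hfail := h1
    -- from a negative-side failure, every support functional is positive on y i
    have hsign : ∀ (i : Fin n) (c : ℝ) (g : X →L[ℝ] ℝ), ‖x i + c • y i‖ < ‖x i‖ → c < 0 →
        ‖g‖ = 1 → g (x i) = ‖x i‖ → 0 < g (y i) := by
      intro i c g hc hcneg hg1 hgx
      have := aux_supp hg1 hgx (v := y i) c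
      nlinarith
    have hsign' : ∀ (i : Fin n) (c : ℝ) (g : X →L[ℝ] ℝ), ‖x i + c • y i‖ < ‖x i‖ → 0 < c →
        ‖g‖ = 1 → g (x i) = ‖x i‖ → g (y i) < 0 := by
      intro i c g hc hcpos hg1 hgx
      have := aux_supp hg1 hgx (v := y i) c
      nlinarith
    -- common sign claim
    have hcommon : (∀ i : Fin n, ‖x i‖ = ‖x‖ → ∃ c : ℝ, 0 < c ∧ ‖x i + c • y i‖ < ‖x i‖) ∨
        (∀ i : Fin n, ‖x i‖ = ‖x‖ → ∃ c : ℝ, 0 < c ∧ ‖x i + (-c) • y i‖ < ‖x i‖) := by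
      by_contra hcon
      push_neg at hcon
      obtain ⟨⟨i, hi, hinopos⟩, ⟨j, hj, hjnoneg⟩⟩ := hcon
      -- at i only negative perturbations work, at j only positive ones
      obtain ⟨ci, hci⟩ := hfail i hi
      obtain ⟨cj, hcj⟩ := hfail j hj
      have hcineg : ci < 0 := by
        rcases lt_trichotomy ci 0 with h | h | h
        · exact h
        · exfalso; rw [h, zero_smul, add_zero] at hci; linarith
        · exfalso; have := hinopos ci h; linarith
      have hcjpos : 0 < cj := by
        rcases lt_trichotomy cj 0 with h | h | h
        · exfalso
          have := hjnoneg (-cj) (by linarith)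
          rw [neg_neg] at this; linarith
        · exfalso; rw [h, zero_smul, add_zero] at hcj; linarith
        · exact h
      have hxi0 : x i ≠ 0 := by
        intro h0; rw [h0, norm_zero] at hi; linarith
      have hxj0 : x j ≠ 0 := by
        intro h0; rw [h0, norm_zero] at hj; linarith
      obtain ⟨g, hg1, hgx⟩ := exists_dual_vector (𝕜 := ℝ) (x i) (norm_ne_zero_iff.2 hxi0)
      obtain ⟨h, hh1, hhx⟩ := exists_dual_vector (𝕜 := ℝ) (x j) (norm_ne_zero_iff.2 hxj0)
      have hgpos : 0 < g (y i) := hsign i ci g hci hcineg hg1 hgx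
      have hhneg : h (y j) < 0 := hsign' j cj h hcj hcjpos hh1 hhx
      have hij : i ≠ j := by
        intro hij; subst hij
        have := hinopos cj hcjpos; linarith
      rcases hij.lt_or_gt with hlt | hlt
      · have := h2 i j hlt hi hj g h hg1 hgx hh1 hhx
        nlinarith
      · have := h2 j i hlt hj hi h g hh1 hhx hg1 hgx
        nlinarith
    -- unify the two cases with a sign ε
    obtain ⟨ε, hεsign, hεall⟩ :
        ∃ ε : ℝ, (ε = 1 ∨ ε = -1) ∧
          ∀ i : Fin n, ‖x i‖ = ‖x‖ → ∃ c : ℝ, 0 < c ∧ ‖x i + (ε * c) • y i‖ < ‖x i‖ := by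
      rcases hcommon with hc | hc
      · exact ⟨1, Or.inl rfl, fun i hi => by
          obtain ⟨c, hc0, hcn⟩ := hc i hi
          exact ⟨c, hc0, by rwa [one_mul]⟩⟩
      · exact ⟨-1, Or.inr rfl, fun i hi => by
          obtain ⟨c, hc0, hcn⟩ := hc i hi
          exact ⟨c, hc0, by rwa [show (-1:ℝ) * c = -c by ring]⟩⟩
    -- for each coordinate, find a threshold below which the norm drops below ‖x‖
    have key : ∀ i : Fin n, ∃ c : ℝ, 0 < c ∧
        ∀ t : ℝ, 0 < t → t ≤ c → ‖x i + (ε * t) • y i‖ < ‖x‖ := by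
      intro i
      by_cases hi : ‖x i‖ = ‖x‖
      · obtain ⟨c, hc0, hcn⟩ := hεall i hi
        refine ⟨c, hc0, fun t ht0 htc => ?_⟩
        have : ‖x i + ((t / c) * (ε * c)) • y i‖ < ‖x i‖ :=
          aux_scale hcn (div_pos ht0 hc0) (div_le_one_of_le₀ htc hc0.le)
        rw [show (t / c) * (ε * c) = ε * t by field_simp] at this
        linarith [hi ▸ this]
      · have hilt : ‖x i‖ < ‖x‖ := lt_of_le_of_ne (apply_le x i) hi
        refine ⟨(‖x‖ - ‖x i‖) / (‖y i‖ + 1), div_pos (by linarith)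
          (by positivity), fun t ht0 htc => ?_⟩
        have hεabs : |ε| = 1 := by rcases hεsign with h | h <;> simp [h]
        have h1 : ‖x i + (ε * t) • y i‖ ≤ ‖x i‖ + t * ‖y i‖ := by
          calc ‖x i + (ε * t) • y i‖ ≤ ‖x i‖ + ‖(ε * t) • y i‖ := norm_add_le _ _
            _ = ‖x i‖ + |ε * t| * ‖y i‖ := by rw [norm_smul, Real.norm_eq_abs]
            _ = ‖x i‖ + t * ‖y i‖ := by rw [abs_mul, hεabs, one_mul, abs_of_pos ht0]
        have h2 : t * (‖y i‖ + 1) ≤ ‖x‖ - ‖x i‖ := by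
          rw [le_div_iff₀ (by positivity)] at htc
          linarith
        nlinarith [norm_nonneg (y i)]
    choose c hc0 hcbound using key
    set t := Finset.univ.inf' (Finset.univ_nonempty) c with ht
    have ht0 : 0 < t := (Finset.lt_inf'_iff _).2 fun i _ => hc0 i
    have hlt : ‖x + (ε * t) • y‖ < ‖x‖ := by
      apply sup_lt
      intro i
      rw [happly]
      exact hcbound i t ht0 (Finset.inf'_le _ (Finset.mem_univ i))
    linarith [horth (ε * t)]
  · -- backward direction
    rintro (⟨i, hi, hbj⟩ | ⟨i, j, hij, hxi, hxj, g, h, hg1, hgx, hh1, hhx, hprod⟩) lam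
    · calc ‖x‖ = ‖x i‖ := hi.symm
        _ ≤ ‖x i + lam • y i‖ := hbj lam
        _ = ‖(x + lam • y) i‖ := by rw [happly]
        _ ≤ ‖x + lam • y‖ := apply_le _ i
    · rcases mul_neg_iff.1 hprod with ⟨hgp, hhn⟩ | ⟨hgn, hhp⟩
      · rcases le_total 0 lam with hl | hl
        · exact one_side i g hxi hg1 hgx lam (mul_nonneg hl hgp.le)
        · exact one_side j h hxj hh1 hhx lam (by nlinarith)
      · rcases le_total 0 lam with hl | hl
        · exact one_side j h hxj hh1 hhx lam (mul_nonneg hl hhp.le)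
        · exact one_side i g hxi hg1 hgx lam (by nlinarith)
end

section
/- Let X be a real Banach space. A nonzero point x = (x_1,…,x_n) ∈ X_∞^n is a smooth point (has a unique norm-one support functional) if and only if there is a unique index i with ‖x_i‖ = ‖x‖ and that coordinate x_i is a smooth point of X. -/
open ENNReal

section Aux

variable {X : Type*} [NormedAddCommGroup X] [NormedSpace ℝ X] {n : ℕ}

local notation "E" => PiLp ⊤ (fun _ : Fin n => X)

omit [NormedSpace ℝ X] in
lemma coord_le_norm (y : E) (i : Fin n) : ‖y i‖ ≤ ‖y‖ := by
  rw [PiLp.norm_eq_ciSup]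
  exact le_ciSup (f := fun j => ‖y j‖) (Set.Finite.bddAbove (Set.finite_range _)) i

noncomputable def projCLM (i : Fin n) : E →L[ℝ] X :=
  LinearMap.mkContinuous
    { toFun := fun y => y i, map_add' := fun _ _ => rfl, map_smul' := fun _ _ => rfl } 1
    (fun y => by rw [one_mul]; exact coord_le_norm y i)

@[simp] lemma projCLM_apply (i : Fin n) (y : E) : projCLM i y = y i := rfl

lemma projCLM_norm_le (i : Fin n) : ‖(projCLM i : E →L[ℝ] X)‖ ≤ 1 :=
  LinearMap.mkContinuous_norm_le _ zero_le_one _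

noncomputable def singleCLM (i : Fin n) : X →L[ℝ] E :=
  LinearMap.mkContinuous
    ((WithLp.linearEquiv ⊤ ℝ (∀ _ : Fin n, X)).symm.toLinearMap.comp
      (LinearMap.single ℝ (fun _ : Fin n => X) i))
    1
    (fun v => by
      rw [one_mul, PiLp.norm_eq_ciSup]
      apply Real.iSup_le _ (norm_nonneg v)
      intro j
      rcases eq_or_ne j i with rfl | hj
      · simp
      · simp [Pi.single_eq_of_ne hj, hj])

@[simp] lemma singleCLM_apply (i : Fin n) (v : X) (j : Fin n) :
    (singleCLM i v : E) j = (Pi.single i v : Fin n → X) j := rfl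

lemma singleCLM_norm_le (i : Fin n) : ‖(singleCLM i : X →L[ℝ] E)‖ ≤ 1 :=
  LinearMap.mkContinuous_norm_le _ zero_le_one _

lemma sum_singleCLM (y : E) : ∑ j, (singleCLM j (y j) : E) = y := by
  apply (WithLp.linearEquiv ⊤ ℝ _).injective
  rw [map_sum]
  exact Finset.univ_sum_single _

lemma exists_dual_real [CompleteSpace X] (y : X) (hy : y ≠ 0) :
    ∃ g : X →L[ℝ] ℝ, ‖g‖ = 1 ∧ g y = ‖y‖ := by
  obtain ⟨g, h1, h2⟩ := exists_dual_vector ℝ y (norm_ne_zero_iff.mpr hy)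
  exact ⟨g, h1, by simpa using h2⟩

end Aux

/-- A nonzero point of `X_∞^n` is smooth iff exactly one coordinate
attains the max norm and that coordinate is smooth. -/
theorem stmt2 {X : Type*} [NormedAddCommGroup X] [NormedSpace ℝ X] [CompleteSpace X]
    {n : ℕ} (x : PiLp ⊤ (fun _ : Fin n => X)) (hx : x ≠ 0) :
    (∃! f : PiLp ⊤ (fun _ : Fin n => X) →L[ℝ] ℝ, ‖f‖ = 1 ∧ f x = ‖x‖) ↔
      ∃ i : Fin n, (∀ j : Fin n, ‖x j‖ = ‖x‖ ↔ j = i) ∧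
        (∃! g : X →L[ℝ] ℝ, ‖g‖ = 1 ∧ g (x i) = ‖x i‖) := by
  have hxpos : (0:ℝ) < ‖x‖ := norm_pos_iff.mpr hx
  obtain ⟨i0, hi0⟩ : ∃ i, x i ≠ 0 := by
    by_contra h
    push_neg at h
    exact hx (PiLp.ext fun i => by simp [h i])
  haveI : Nonempty (Fin n) := ⟨i0⟩
  -- a maximal coordinate exists
  obtain ⟨i, hi⟩ := Finite.exists_max (fun j => ‖x j‖)
  have himax : ‖x i‖ = ‖x‖ := by
    refine le_antisymm (coord_le_norm x i) ?_
    rw [PiLp.norm_eq_ciSup]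
    exact ciSup_le hi
  -- composing a support functional of a max coordinate with the projection
  have comp_support : ∀ (k : Fin n) (g : X →L[ℝ] ℝ), ‖g‖ = 1 → g (x k) = ‖x‖ →
      ‖g.comp (projCLM k)‖ = 1 ∧ (g.comp (projCLM k)) x = ‖x‖ := by
    intro k g hg1 hg2
    have happ : (g.comp (projCLM k)) x = ‖x‖ := by
      simp [ContinuousLinearMap.comp_apply, hg2]
    refine ⟨le_antisymm ?_ ?_, happ⟩
    · calc ‖g.comp (projCLM k)‖ ≤ ‖g‖ * ‖(projCLM k : PiLp ⊤ (fun _ : Fin n => X) →L[ℝ] X)‖ :=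
            ContinuousLinearMap.opNorm_comp_le _ _
        _ ≤ 1 := by rw [hg1, one_mul]; exact projCLM_norm_le k
    · have := (g.comp (projCLM k)).le_opNorm x
      rw [happ, Real.norm_of_nonneg (norm_nonneg x)] at this
      nlinarith
  constructor
  · rintro ⟨f, ⟨hf1, hf2⟩, hfu⟩
    refine ⟨i, ?_, ?_⟩
    · intro j
      constructor
      · intro hj
        by_contra hji
        -- two distinct support functionals
        obtain ⟨gi, hgi1, hgi2⟩ := exists_dual_real (x i) (by
          intro h; rw [h, norm_zero] at himax; exact hxpos.ne himax)
        obtain ⟨gj, hgj1, hgj2⟩ := exists_dual_real (x j) (by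
          intro h; rw [h, norm_zero] at hj; exact hxpos.ne hj)
        rw [himax] at hgi2
        rw [hj] at hgj2
        have hFi := comp_support i gi hgi1 hgi2
        have hFj := comp_support j gj hgj1 hgj2
        have e1 := hfu _ hFi
        have e2 := hfu _ hFj
        have : gi.comp (projCLM i) = gj.comp (projCLM j) := e1.trans e2.symm
        have hval := congrArg (fun F => F (singleCLM i (x i))) this
        simp only [ContinuousLinearMap.comp_apply, projCLM_apply] at hval
        have hii : (singleCLM i (x i) : PiLp ⊤ (fun _ : Fin n => X)) i = x i := by
          simp
        have hij : (singleCLM i (x i) : PiLp ⊤ (fun _ : Fin n => X)) j = 0 := by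
          simp [Pi.single_eq_of_ne (Ne.symm (by exact fun h => hji h.symm) : j ≠ i)]
        rw [hii, hij] at hval
        rw [hgi2, map_zero] at hval
        exact hxpos.ne' hval
      · rintro rfl; exact himax
    · -- smoothness of x i
      obtain ⟨g, hg1, hg2⟩ := exists_dual_real (x i) (by
        intro h; rw [h, norm_zero] at himax; exact hxpos.ne himax)
      refine ⟨g, ⟨hg1, hg2⟩, ?_⟩
      intro g' ⟨hg'1, hg'2⟩
      have h2 : g' (x i) = ‖x‖ := by rw [hg'2, himax]
      have h2' : g (x i) = ‖x‖ := by rw [hg2, himax]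
      have hF := comp_support i g hg1 h2'
      have hF' := comp_support i g' hg'1 h2
      have : g'.comp (projCLM i) = g.comp (projCLM i) := (hfu _ hF').trans (hfu _ hF).symm
      ext v
      have := congrArg (fun F => F (singleCLM i v)) this
      simpa using this
  · rintro ⟨k, hk, g, ⟨hg1, hg2⟩, hgu⟩
    have hkmax : ‖x k‖ = ‖x‖ := (hk k).mpr rfl
    have hgk : g (x k) = ‖x‖ := by rw [hg2, hkmax]
    obtain ⟨hF1, hF2⟩ := comp_support k g hg1 hgk
    refine ⟨g.comp (projCLM k), ⟨hF1, hF2⟩, ?_⟩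
    rintro f ⟨hf1, hf2⟩
    -- Step 1: f vanishes on single j v for j ≠ k
    have step1 : ∀ j : Fin n, j ≠ k → ∀ v : X, f (singleCLM j v) = 0 := by
      intro j hj v
      have hlt : ‖x j‖ < ‖x‖ := lt_of_le_of_ne (coord_le_norm x j) (fun h => hj ((hk j).mp h))
      set δ := ‖x‖ - ‖x j‖ with hδ
      have hδpos : 0 < δ := sub_pos.mpr hlt
      -- for small v, f (single j v) ≤ 0
      have key : ∀ w : X, ‖w‖ ≤ δ → f (singleCLM j w) ≤ 0 := by
        intro w hw
        have hnorm : ‖x + (singleCLM j w : PiLp ⊤ (fun _ : Fin n => X))‖ ≤ ‖x‖ := by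
          rw [PiLp.norm_eq_ciSup]
          apply Real.iSup_le _ hxpos.le
          intro l
          have : (x + (singleCLM j w : PiLp ⊤ (fun _ : Fin n => X))) l
              = x l + (Pi.single j w : Fin n → X) l := rfl
          rw [this]
          rcases eq_or_ne l j with rfl | hl
          · rw [Pi.single_eq_same]
            calc ‖x l + w‖ ≤ ‖x l‖ + ‖w‖ := norm_add_le _ _
              _ ≤ ‖x l‖ + δ := by linarith
              _ = ‖x‖ := by rw [hδ]; ring
          · rw [Pi.single_eq_of_ne hl, add_zero]
            exact coord_le_norm x l
        have hle : f (x + singleCLM j w) ≤ ‖x‖ := by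
          calc f (x + singleCLM j w) ≤ ‖f (x + singleCLM j w)‖ := le_abs_self _
            _ ≤ ‖f‖ * ‖x + (singleCLM j w : PiLp ⊤ (fun _ : Fin n => X))‖ := f.le_opNorm _
            _ ≤ 1 * ‖x‖ := by rw [hf1]; simpa using hnorm
            _ = ‖x‖ := one_mul _
        rw [map_add, hf2] at hle
        linarith
      -- hence = 0 for small, then all by scaling
      have key0 : ∀ w : X, ‖w‖ ≤ δ → f (singleCLM j w) = 0 := by
        intro w hw
        have h1 := key w hw
        have h2 := key (-w) (by rwa [norm_neg])
        rw [map_neg, map_neg] at h2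
        linarith
      rcases eq_or_ne v 0 with rfl | hv
      · simp
      · have hvn : 0 < ‖v‖ := norm_pos_iff.mpr hv
        have : f (singleCLM j ((δ / ‖v‖) • v)) = 0 := by
          apply key0
          rw [norm_smul, Real.norm_eq_abs, abs_of_pos (div_pos hδpos hvn)]
          field_simp
          exact le_rfl
        rw [map_smul, map_smul] at this
        have := smul_eq_zero.mp this
        rcases this with h | h
        · exact absurd h (by positivity)
        · exact h
    -- Step 2: h := f ∘ single k is a support functional of x k
    have hdecomp : ∀ y : PiLp ⊤ (fun _ : Fin n => X), f y = f (singleCLM k (y k)) := by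
      intro y
      conv_lhs => rw [← sum_singleCLM y]
      rw [map_sum]
      rw [Finset.sum_eq_single k]
      · intro j _ hj
        exact step1 j hj (y j)
      · intro h
        exact absurd (Finset.mem_univ k) h
    have hhx : f (singleCLM k (x k)) = ‖x k‖ := by
      rw [← hdecomp x, hf2, hkmax]
    set h : X →L[ℝ] ℝ := f.comp (singleCLM k) with hh
    have hxk : (0:ℝ) < ‖x k‖ := by rw [hkmax]; exact hxpos
    have hh2 : h (x k) = ‖x k‖ := hhx
    have hh1 : ‖h‖ = 1 := by
      refine le_antisymm ?_ ?_
      · calc ‖h‖ ≤ ‖f‖ * ‖(singleCLM k : X →L[ℝ] PiLp ⊤ (fun _ : Fin n => X))‖ :=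
            ContinuousLinearMap.opNorm_comp_le _ _
          _ ≤ 1 := by rw [hf1, one_mul]; exact singleCLM_norm_le k
      · have := h.le_opNorm (x k)
        rw [hh2, Real.norm_of_nonneg (norm_nonneg (x k))] at this
        nlinarith
    have : h = g := hgu h ⟨hh1, hh2⟩
    ext y
    have := congrArg (fun t : X →L[ℝ] ℝ => t (y k)) this
    simp only [hh, ContinuousLinearMap.comp_apply] at this
    rw [hdecomp y, this]
    rfl
end

section
/- Let X be a real Banach space with dim X ≥ 1, and let x = (x_1,…,x_n) ∈ X_∞^n be nonzero. If x is a right-symmetric point of X_∞^n (i.e., for all y, y ⊥_B x implies x ⊥_B y), then ‖x_i‖ = ‖x‖ for every 1 ≤ i ≤ n. -/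
open ENNReal

/-- A nonzero right-symmetric point of `X_∞^n` has all its
coordinates of maximal norm. -/
theorem stmt6 {X : Type*} [NormedAddCommGroup X] [NormedSpace ℝ X] [CompleteSpace X]
    [Nontrivial X] {n : ℕ} (x : PiLp ⊤ (fun _ : Fin n => X)) (hx : x ≠ 0)
    (hsym : ∀ y : PiLp ⊤ (fun _ : Fin n => X),
      (∀ lam : ℝ, ‖y + lam • x‖ ≥ ‖y‖) → (∀ lam : ℝ, ‖x + lam • y‖ ≥ ‖x‖)) :
    ∀ i : Fin n, ‖x i‖ = ‖x‖ := by
  classical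
  intro i
  haveI : Nonempty (Fin n) := ⟨i⟩
  set M := ‖x‖ with hM
  have hMpos : 0 < M := norm_pos_iff.mpr hx
  have hnorm : ∀ z : PiLp ⊤ (fun _ : Fin n => X), ‖z‖ = ⨆ j, ‖z j‖ :=
    fun z => PiLp.norm_eq_ciSup z
  have hbdd : ∀ z : PiLp ⊤ (fun _ : Fin n => X), BddAbove (Set.range fun j => ‖z j‖) :=
    fun z => Set.Finite.bddAbove (Set.finite_range _)
  have hcoord : ∀ (z : PiLp ⊤ (fun _ : Fin n => X)) (j : Fin n), ‖z j‖ ≤ ‖z‖ := by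
    intro z j
    rw [hnorm z]
    exact le_ciSup (hbdd z) j
  have hile : ‖x i‖ ≤ M := hcoord x i
  by_contra hne
  have hlt : ‖x i‖ < M := lt_of_le_of_ne hile hne
  -- there is a coordinate of maximal norm
  obtain ⟨k, hk⟩ : ∃ k, ‖x k‖ = M := by
    obtain ⟨k, hkmax⟩ := Finite.exists_max (fun j => ‖x j‖)
    refine ⟨k, le_antisymm (hcoord x k) ?_⟩
    rw [hM, hnorm x]
    exact ciSup_le hkmax
  have hki : k ≠ i := by
    intro h; rw [h] at hk; exact (ne_of_lt hlt) hk
  -- define the perturbation vector v at coordinate i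
  obtain ⟨u0, hu0⟩ := exists_ne (0 : X)
  set v : X := if x i = 0 then (M / ‖u0‖) • u0 else (-(M / ‖x i‖)) • (x i) with hv
  have hvnorm : ‖v‖ = M := by
    rw [hv]
    split_ifs with h
    · rw [norm_smul, Real.norm_eq_abs, abs_of_nonneg (by positivity), div_mul_cancel₀]
      exact norm_ne_zero_iff.mpr hu0
    · rw [norm_smul, Real.norm_eq_abs, abs_neg, abs_of_nonneg (by positivity),
        div_mul_cancel₀]
      exact norm_ne_zero_iff.mpr h
  have hvlow : ∀ lam : ℝ, lam ≤ 0 → M ≤ ‖v + lam • x i‖ := by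
    intro lam hlam
    rw [hv]
    split_ifs with h
    · rw [h, smul_zero, add_zero, norm_smul, Real.norm_eq_abs,
        abs_of_nonneg (by positivity), div_mul_cancel₀]
      exact norm_ne_zero_iff.mpr hu0
    · have : (-(M / ‖x i‖)) • (x i) + lam • x i = (lam - M / ‖x i‖) • x i := by
        rw [sub_smul, neg_smul, sub_eq_add_neg, add_comm]
      rw [this, norm_smul, Real.norm_eq_abs]
      have hxi : 0 < ‖x i‖ := norm_pos_iff.mpr h
      have habs : |lam - M / ‖x i‖| = M / ‖x i‖ - lam := by
        rw [abs_of_nonpos (by nlinarith [div_pos hMpos hxi])]; ring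
      rw [habs]
      have : (M / ‖x i‖ - lam) * ‖x i‖ = M - lam * ‖x i‖ := by
        field_simp
      rw [this]
      nlinarith
  -- define y
  set y : PiLp ⊤ (fun _ : Fin n => X) := WithLp.toLp ⊤ (fun j => if j = i then v else x j) with hy
  have hyapp : ∀ j, y j = if j = i then v else x j := fun j => rfl
  have hynorm : ‖y‖ = M := by
    apply le_antisymm
    · rw [hnorm y]
      apply ciSup_le
      intro j
      rw [hyapp j]
      split_ifs with h
      · rw [hvnorm]
      · exact hcoord x j
    · calc M = ‖y i‖ := by rw [hyapp i, if_pos rfl, hvnorm]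
        _ ≤ ‖y‖ := hcoord y i
  -- y ⊥_B x
  have hperp : ∀ lam : ℝ, ‖y + lam • x‖ ≥ ‖y‖ := by
    intro lam
    rw [hynorm]
    rcases le_or_gt 0 lam with hlam | hlam
    · calc M = ‖x k‖ := hk.symm
        _ ≤ (1 + lam) * ‖x k‖ := by nlinarith [norm_nonneg (x k)]
        _ = ‖x k + lam • x k‖ := by
            rw [← norm_smul_of_nonneg (by linarith), add_smul, one_smul]
        _ = ‖(y + lam • x) k‖ := by
            rw [PiLp.add_apply, PiLp.smul_apply, hyapp k, if_neg hki]
        _ ≤ ‖y + lam • x‖ := hcoord _ k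
    · calc M ≤ ‖v + lam • x i‖ := hvlow lam hlam.le
        _ = ‖(y + lam • x) i‖ := by
            rw [PiLp.add_apply, PiLp.smul_apply, hyapp i, if_pos rfl]
        _ ≤ ‖y + lam • x‖ := hcoord _ i
  have hxy := hsym y hperp
  -- choose small negative lambda
  set ε : ℝ := (M - ‖x i‖) / (2 * M) with hε
  have hεpos : 0 < ε := by apply div_pos <;> linarith
  have hεlt : ε < 1 := by
    rw [hε, div_lt_one (by linarith)]
    nlinarith [norm_nonneg (x i)]
  have hεM : ‖x i‖ + ε * M < M := by
    rw [hε]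
    have : (M - ‖x i‖) / (2 * M) * M = (M - ‖x i‖) / 2 := by field_simp
    rw [this]; linarith
  have hcontra : ‖x + (-ε) • y‖ < M := by
    rw [hnorm]
    have hc : ∀ j, ‖(x + (-ε) • y) j‖ ≤ max ((1 - ε) * M) (‖x i‖ + ε * M) := by
      intro j
      rw [PiLp.add_apply, PiLp.smul_apply, hyapp j]
      split_ifs with h
      · subst h
        refine le_trans (le_trans (norm_add_le _ _) ?_) (le_max_right _ _)
        rw [norm_smul, Real.norm_eq_abs, abs_neg, abs_of_pos hεpos, hvnorm]
      · refine le_trans ?_ (le_max_left _ _)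
        have : x j + (-ε) • x j = (1 - ε) • x j := by
          rw [sub_smul, one_smul, neg_smul, ← sub_eq_add_neg]
        rw [this, norm_smul, Real.norm_eq_abs, abs_of_pos (by linarith)]
        have := hcoord x j
        nlinarith
    calc (⨆ j, ‖(x + (-ε) • y) j‖) ≤ max ((1 - ε) * M) (‖x i‖ + ε * M) := ciSup_le hc
      _ < M := by
          apply max_lt
          · nlinarith
          · exact hεM
  exact absurd (hxy (-ε)) (by simpa using not_le.mpr hcontra)
end

section
/- Let X be a real Banach space and x = (x_1,…,x_n) ∈ X_∞^n with ‖x_i‖ < ‖x‖ for some index i. Then for every ε > 0 there exists y = (y_1,…,y_n) ∈ X_∞^n with y ⊥_B x and not x ⊥_B y, such that ‖y_i‖ = ‖y‖ and ‖y_j‖ < ε for all j ≠ i. -/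
open ENNReal

set_option maxHeartbeats 1000000 in
/-- If some coordinate of `x ∈ X_∞^n` has norm strictly less than
`‖x‖`, then for every `ε > 0` there is `y` with `y ⊥_B x`, `¬ x ⊥_B y`, whose
`i`-th coordinate attains `‖y‖` and whose other coordinates have norm `< ε`. -/
theorem stmt7 {X : Type*} [NormedAddCommGroup X] [NormedSpace ℝ X] [CompleteSpace X]
    {n : ℕ} (x : PiLp ⊤ (fun _ : Fin n => X)) (i : Fin n) (hi : ‖x i‖ < ‖x‖) :
    ∀ ε > (0 : ℝ), ∃ y : PiLp ⊤ (fun _ : Fin n => X),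
      (∀ lam : ℝ, ‖y + lam • x‖ ≥ ‖y‖) ∧
      ¬ (∀ lam : ℝ, ‖x + lam • y‖ ≥ ‖x‖) ∧
      ‖y i‖ = ‖y‖ ∧ ∀ j : Fin n, j ≠ i → ‖y j‖ < ε := by
  classical
  intro ε hε
  have : Nonempty (Fin n) := ⟨i⟩
  have hx : (0 : ℝ) < ‖x‖ := lt_of_le_of_lt (norm_nonneg _) hi
  have coord_le : ∀ (f : PiLp ⊤ (fun _ : Fin n => X)) (j : Fin n), ‖f j‖ ≤ ‖f‖ := by
    intro f j
    rw [PiLp.norm_eq_ciSup]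
    exact le_ciSup (f := fun j => ‖f j‖) (Set.Finite.bddAbove (Set.finite_range _)) j
  have norm_le : ∀ (f : PiLp ⊤ (fun _ : Fin n => X)) (C : ℝ), 0 ≤ C →
      (∀ j, ‖f j‖ ≤ C) → ‖f‖ ≤ C := by
    intro f C hC h
    rw [PiLp.norm_eq_ciSup]
    rcases isEmpty_or_nonempty (Fin n) with h' | h'
    · simpa using hC
    · exact ciSup_le h
  -- a coordinate attaining the norm
  obtain ⟨k, hk⟩ := Finite.exists_max (fun j : Fin n => ‖x j‖)
  have hkx : ‖x k‖ = ‖x‖ := le_antisymm (coord_le x k) (norm_le x ‖x k‖ (norm_nonneg _) hk)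
  have hki : k ≠ i := by
    intro h; rw [h] at hkx; exact absurd hkx (ne_of_lt hi)
  set δ : ℝ := ε / 2 with hδ
  have hδ0 : 0 < δ := by positivity
  set η : ℝ := δ / ‖x‖ with hη
  have hη0 : 0 < η := by positivity
  have hηx : η * ‖x‖ = δ := by rw [hη]; exact div_mul_cancel₀ δ hx.ne'
  -- the unit vector v
  set v : X := if x i = 0 then ‖x k‖⁻¹ • x k else ‖x i‖⁻¹ • x i with hv
  have hxk0 : x k ≠ 0 := by
    intro h; rw [h, norm_zero] at hkx; exact absurd hkx.symm (ne_of_gt hx)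
  have hv1 : ‖v‖ = 1 := by
    rw [hv]; split
    · rw [norm_smul, norm_inv, norm_norm]
      field_simp [norm_ne_zero_iff.mpr hxk0]
    · rw [norm_smul, norm_inv, norm_norm]
      field_simp [norm_ne_zero_iff.mpr ‹x i ≠ 0›]
  set y : PiLp ⊤ (fun _ : Fin n => X) :=
    WithLp.toLp ⊤ (fun j => if j = i then δ • v else (-η) • x j) with hy
  have hyi : y i = δ • v := by simp [hy]
  have hyni : ∀ j, j ≠ i → y j = (-η) • x j := by intro j hj; simp [hy, hj]
  have hyinorm : ‖y i‖ = δ := by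
    rw [hyi, norm_smul, hv1, Real.norm_eq_abs, abs_of_pos hδ0, mul_one]
  have hynorm : ‖y‖ = δ := by
    refine le_antisymm (norm_le y δ hδ0.le ?_) (hyinorm ▸ coord_le y i)
    intro j
    by_cases hj : j = i
    · rw [hj, hyinorm]
    · rw [hyni j hj, norm_smul, Real.norm_eq_abs, abs_neg, abs_of_pos hη0]
      calc η * ‖x j‖ ≤ η * ‖x‖ := by nlinarith [coord_le x j]
        _ = δ := hηx
  refine ⟨y, ?_, ?_, hyinorm.trans hynorm.symm, ?_⟩
  · -- y ⊥_B x
    intro lam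
    rw [hynorm]
    rcases le_or_gt 0 lam with hlam | hlam
    · -- use coordinate i
      have h1 : (y + lam • x) i = δ • v + lam • x i := by
        simp [hyi, PiLp.add_apply, PiLp.smul_apply]
      have h2 : ‖δ • v + lam • x i‖ ≥ δ := by
        by_cases hxi : x i = 0
        · rw [hxi, smul_zero, add_zero, norm_smul, hv1, mul_one,
            Real.norm_eq_abs, abs_of_pos hδ0]
        · have hxin : (0:ℝ) < ‖x i‖ := norm_pos_iff.mpr hxi
          have : δ • v + lam • x i = (δ / ‖x i‖ + lam) • x i := by
            rw [div_eq_mul_inv, add_smul, hv, if_neg hxi, smul_smul]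
          rw [this, norm_smul, Real.norm_eq_abs]
          have h3 : (0:ℝ) ≤ δ / ‖x i‖ + lam := by positivity
          rw [abs_of_nonneg h3]
          have : (δ / ‖x i‖ + lam) * ‖x i‖ = δ + lam * ‖x i‖ := by field_simp
          rw [this]; nlinarith
      calc δ ≤ ‖(y + lam • x) i‖ := by rw [h1]; exact h2
        _ ≤ ‖y + lam • x‖ := coord_le _ i
    · -- use coordinate k
      have h1 : (y + lam • x) k = (-η + lam) • x k := by
        simp [hyni k hki, PiLp.add_apply, PiLp.smul_apply, add_smul]
      have h2 : ‖(-η + lam) • x k‖ ≥ δ := by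
        rw [norm_smul, Real.norm_eq_abs, hkx]
        have : |(-η + lam)| = η - lam := by
          rw [abs_of_neg (by linarith)]; ring
        rw [this]; nlinarith
      calc δ ≤ ‖(y + lam • x) k‖ := by rw [h1]; exact h2
        _ ≤ ‖y + lam • x‖ := coord_le _ k
  · -- ¬ x ⊥_B y
    intro hcon
    set lam0 : ℝ := min ((‖x‖ - ‖x i‖) / (2 * δ)) (1 / (2 * η)) with hlam0
    have hl0 : 0 < lam0 := by
      apply lt_min
      · apply div_pos (by linarith) (by positivity)
      · positivity
    have hl1 : lam0 * δ ≤ (‖x‖ - ‖x i‖) / 2 := by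
      have := min_le_left ((‖x‖ - ‖x i‖) / (2 * δ)) (1 / (2 * η))
      rw [← hlam0] at this
      calc lam0 * δ ≤ ((‖x‖ - ‖x i‖) / (2 * δ)) * δ := by nlinarith
        _ = (‖x‖ - ‖x i‖) / 2 := by field_simp
    have hl2 : lam0 * η ≤ 1 / 2 := by
      have := min_le_right ((‖x‖ - ‖x i‖) / (2 * δ)) (1 / (2 * η))
      rw [← hlam0] at this
      calc lam0 * η ≤ (1 / (2 * η)) * η := by nlinarith
        _ = 1 / 2 := by field_simp
    set C : ℝ := max (‖x i‖ + lam0 * δ) ((1 - lam0 * η) * ‖x‖) with hC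
    have hCx : C < ‖x‖ := by
      apply max_lt
      · nlinarith
      · nlinarith
    have hbound : ‖x + lam0 • y‖ ≤ C := by
      have hC0 : (0:ℝ) ≤ C := le_trans (add_nonneg (norm_nonneg _) (mul_pos hl0 hδ0).le) (le_max_left _ _)
      apply norm_le _ C hC0
      intro j
      by_cases hj : j = i
      · subst hj
        have h1 : (x + lam0 • y) j = x j + lam0 • (δ • v) := by
          simp [hyi, PiLp.add_apply, PiLp.smul_apply]
        rw [h1]
        refine le_trans (le_trans (norm_add_le _ _) ?_) (le_max_left _ _)
        rw [norm_smul, norm_smul, hv1, mul_one, Real.norm_eq_abs, Real.norm_eq_abs,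
          abs_of_pos hl0, abs_of_pos hδ0]
      · have h1 : (x + lam0 • y) j = (1 - lam0 * η) • x j := by
          simp only [PiLp.add_apply, PiLp.smul_apply, hyni j hj]
          module
        rw [h1]
        refine le_trans ?_ (le_max_right _ _)
        rw [norm_smul, Real.norm_eq_abs, abs_of_nonneg (by linarith)]
        have := coord_le x j
        nlinarith
    exact absurd (hcon lam0) (not_le.mpr (lt_of_le_of_lt hbound hCx))
  · -- small coordinates
    intro j hj
    have h1 : ‖y j‖ ≤ δ := by rw [← hynorm]; exact coord_le y j
    calc ‖y j‖ ≤ δ := h1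
      _ < ε := by rw [hδ]; linarith
end

section
/- Let X and Y be finite-dimensional real Banach spaces. An operator T ∈ B(X,Y), T ≠ 0, is a smooth point of B(X,Y) if and only if the norm-attaining set M_T = {x ∈ X : ‖x‖ = 1, ‖Tx‖ = ‖T‖} equals {x_0, −x_0} for some unit vector x_0, and Tx_0 is a smooth point of Y. -/
open Filter Topology

section Aux

variable {X Y : Type*} [NormedAddCommGroup X] [NormedSpace ℝ X] [FiniteDimensional ℝ X]
  [NormedAddCommGroup Y] [NormedSpace ℝ Y] [FiniteDimensional ℝ Y]

lemma exists_norm_attain [Nontrivial X] (A : X →L[ℝ] Y) :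
    ∃ x : X, ‖x‖ = 1 ∧ ‖A x‖ = ‖A‖ := by
  obtain ⟨x, hxs, hmax⟩ := (isCompact_sphere (0 : X) 1).exists_isMaxOn
    (NormedSpace.sphere_nonempty.2 zero_le_one)
    ((continuous_norm.comp A.continuous).continuousOn)
  rw [mem_sphere_zero_iff_norm] at hxs
  refine ⟨x, hxs, le_antisymm (by simpa [hxs] using A.le_opNorm x) ?_⟩
  refine A.opNorm_le_bound (norm_nonneg _) fun y => ?_
  rcases eq_or_ne y 0 with rfl | hy
  · simp
  · have hyn : ‖y‖ ≠ 0 := norm_ne_zero_iff.2 hy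
    have hmem : ‖y‖⁻¹ • y ∈ Metric.sphere (0 : X) 1 := by
      rw [mem_sphere_zero_iff_norm, norm_smul, norm_inv, norm_norm,
        inv_mul_cancel₀ hyn]
    have := hmax hmem
    simp only [Function.comp, Set.mem_setOf_eq] at this
    rw [map_smul, norm_smul, norm_inv, norm_norm] at this
    have h2 : ‖A y‖ = ‖y‖ * (‖y‖⁻¹ * ‖A y‖) := by
      field_simp
    rw [h2, mul_comm ‖A x‖ ‖y‖]
    exact mul_le_mul_of_nonneg_left this (norm_nonneg _)

end Aux

section Key

set_option linter.unusedSectionVars false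

variable {X Y : Type*} [NormedAddCommGroup X] [NormedSpace ℝ X] [FiniteDimensional ℝ X]
  [NormedAddCommGroup Y] [NormedSpace ℝ Y] [FiniteDimensional ℝ Y]

set_option maxHeartbeats 1000000 in
lemma key {T : X →L[ℝ] Y} (hT : T ≠ 0) {x₀ : X}
    (hM : {x : X | ‖x‖ = 1 ∧ ‖T x‖ = ‖T‖} = {x₀, -x₀})
    {g : Y →L[ℝ] ℝ} (hg1 : ‖g‖ = 1) (hg2 : g (T x₀) = ‖T x₀‖)
    (hgu : ∀ g' : Y →L[ℝ] ℝ, ‖g'‖ = 1 ∧ g' (T x₀) = ‖T x₀‖ → g' = g)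
    {Φ : (X →L[ℝ] Y) →L[ℝ] ℝ} (hΦ1 : ‖Φ‖ = 1) (hΦ2 : Φ T = ‖T‖)
    (S : X →L[ℝ] Y) : Φ S ≤ g (S x₀) := by
  have hx₀M : ‖x₀‖ = 1 ∧ ‖T x₀‖ = ‖T‖ := by
    have : x₀ ∈ ({x₀, -x₀} : Set X) := by simp
    rw [← hM] at this; exact this
  obtain ⟨z, hz⟩ : ∃ z : X, T z ≠ 0 := by
    by_contra h; push_neg at h
    exact hT (ContinuousLinearMap.ext fun z => by simp [h z])
  have : Nontrivial X := nontrivial_of_ne z 0 (fun h => hz (by simp [h]))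
  have : Nontrivial Y := nontrivial_of_ne (T z) 0 hz
  set t : ℕ → ℝ := fun n => 1 / (n + 1 : ℝ) with ht
  have htpos : ∀ n, 0 < t n := fun n => by positivity
  have ht0 : Tendsto t atTop (𝓝 0) := tendsto_one_div_add_atTop_nhds_zero_nat
  have H : ∀ n : ℕ, ∃ (x : X) (gn : Y →L[ℝ] ℝ), ‖x‖ = 1 ∧
      ‖(T + t n • S) x‖ = ‖T + t n • S‖ ∧ ‖gn‖ = 1 ∧
      gn ((T + t n • S) x) = ‖(T + t n • S) x‖ := by
    intro n
    obtain ⟨x, hx1, hx2⟩ := exists_norm_attain (T + t n • S)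
    obtain ⟨gn, hgn1, hgn2⟩ := exists_dual_vector' ℝ ((T + t n • S) x)
    exact ⟨x, gn, hx1, hx2, hgn1, by simpa using hgn2⟩
  choose xs gs hxs1 hxs2 hgs1 hgs2 using H
  -- step (a): Φ S ≤ gs n (S (xs n))
  have hstepa : ∀ n, Φ S ≤ gs n (S (xs n)) := by
    intro n
    have h1 : Φ (T + t n • S) ≤ ‖T + t n • S‖ := by
      calc Φ (T + t n • S) ≤ |Φ (T + t n • S)| := le_abs_self _
        _ ≤ ‖Φ‖ * ‖T + t n • S‖ := Φ.le_opNorm _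
        _ = ‖T + t n • S‖ := by rw [hΦ1, one_mul]
    have h2 : Φ (T + t n • S) = ‖T‖ + t n * Φ S := by
      rw [map_add, map_smul, hΦ2]; rfl
    have h3 : gs n (T (xs n)) ≤ ‖T‖ := by
      calc gs n (T (xs n)) ≤ |gs n (T (xs n))| := le_abs_self _
        _ ≤ ‖gs n‖ * ‖T (xs n)‖ := (gs n).le_opNorm _
        _ = ‖T (xs n)‖ := by rw [hgs1 n, one_mul]
        _ ≤ ‖T‖ * ‖xs n‖ := T.le_opNorm _
        _ = ‖T‖ := by rw [hxs1 n, mul_one]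
    have h4 : ‖T + t n • S‖ = gs n (T (xs n)) + t n * gs n (S (xs n)) := by
      rw [← hxs2 n, ← hgs2 n]
      simp [map_add, map_smul, smul_eq_mul]
    have : ‖T‖ + t n * Φ S ≤ ‖T‖ + t n * gs n (S (xs n)) := by
      calc ‖T‖ + t n * Φ S = Φ (T + t n • S) := h2.symm
        _ ≤ ‖T + t n • S‖ := h1
        _ = gs n (T (xs n)) + t n * gs n (S (xs n)) := h4
        _ ≤ ‖T‖ + t n * gs n (S (xs n)) := by linarith [h3]
    have := (add_le_add_iff_left ‖T‖).mp this
    exact le_of_mul_le_mul_left (by linarith) (htpos n)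
  -- step (b): compactness
  have hcomp : IsCompact ((Metric.sphere (0:X) 1) ×ˢ (Metric.sphere (0 : Y →L[ℝ] ℝ) 1)) :=
    (isCompact_sphere _ _).prod (isCompact_sphere _ _)
  have hmem : ∀ n, (xs n, gs n) ∈
      (Metric.sphere (0:X) 1) ×ˢ (Metric.sphere (0 : Y →L[ℝ] ℝ) 1) := fun n =>
    ⟨mem_sphere_zero_iff_norm.2 (hxs1 n), mem_sphere_zero_iff_norm.2 (hgs1 n)⟩
  obtain ⟨⟨x, h⟩, hxh, φ, hφ, hlim⟩ := hcomp.tendsto_subseq hmem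
  have hx1 : ‖x‖ = 1 := mem_sphere_zero_iff_norm.1 hxh.1
  have hh1 : ‖h‖ = 1 := mem_sphere_zero_iff_norm.1 hxh.2
  have hlimx : Tendsto (fun n => xs (φ n)) atTop (𝓝 x) :=
    (continuous_fst.tendsto _).comp hlim
  have hlimg : Tendsto (fun n => gs (φ n)) atTop (𝓝 h) :=
    (continuous_snd.tendsto _).comp hlim
  have htφ : Tendsto (fun n => t (φ n)) atTop (𝓝 0) := ht0.comp hφ.tendsto_atTop
  have hlimop : Tendsto (fun n => T + t (φ n) • S) atTop (𝓝 T) := by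
    have h1 : Tendsto (fun n => t (φ n) • S) atTop (𝓝 ((0:ℝ) • S)) :=
      htφ.smul tendsto_const_nhds
    rw [zero_smul] at h1
    simpa using tendsto_const_nhds.add h1
  have heval : ∀ (yn : ℕ → Y) (y : Y), Tendsto yn atTop (𝓝 y) →
      Tendsto (fun n => gs (φ n) (yn n)) atTop (𝓝 (h y)) := fun yn y hy =>
    (isBoundedBilinearMap_apply.continuous.tendsto (h, y)).comp (hlimg.prodMk_nhds hy)
  have hTxn : Tendsto (fun n => ‖T (xs (φ n))‖) atTop (𝓝 ‖T x‖) :=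
    (continuous_norm.tendsto _).comp ((T.continuous.tendsto x).comp hlimx)
  have hTx : ‖T x‖ = ‖T‖ := by
    have hub : ∀ n, ‖T (xs (φ n))‖ ≤ ‖T‖ := fun n => by
      calc ‖T (xs (φ n))‖ ≤ ‖T‖ * ‖xs (φ n)‖ := T.le_opNorm _
        _ = ‖T‖ := by rw [hxs1, mul_one]
    have hlb : ∀ n, ‖T‖ - 2 * (t (φ n) * ‖S‖) ≤ ‖T (xs (φ n))‖ := by
      intro n
      have hsm : ‖t (φ n) • S‖ ≤ t (φ n) * ‖S‖ := by
        have := ContinuousLinearMap.opNorm_smul_le (t (φ n)) S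
        rwa [Real.norm_eq_abs, abs_of_pos (htpos _)] at this
      have e1 : ‖T‖ - t (φ n) * ‖S‖ ≤ ‖T + t (φ n) • S‖ := by
        have h5 := norm_sub_norm_le T (-(t (φ n) • S))
        rw [sub_neg_eq_add, norm_neg] at h5
        linarith
      have e2 : ‖T + t (φ n) • S‖ - t (φ n) * ‖S‖ ≤ ‖T (xs (φ n))‖ := by
        have h3 : (T + t (φ n) • S) (xs (φ n)) - (t (φ n) • S) (xs (φ n)) = T (xs (φ n)) := by
          simp
        have h5 := norm_sub_norm_le ((T + t (φ n) • S) (xs (φ n))) ((t (φ n) • S) (xs (φ n)))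
        rw [h3, hxs2] at h5
        have h4 : ‖(t (φ n) • S) (xs (φ n))‖ ≤ t (φ n) * ‖S‖ := by
          calc ‖(t (φ n) • S) (xs (φ n))‖ ≤ ‖t (φ n) • S‖ * ‖xs (φ n)‖ :=
                (t (φ n) • S).le_opNorm _
            _ = ‖t (φ n) • S‖ := by rw [hxs1, mul_one]
            _ ≤ t (φ n) * ‖S‖ := hsm
        linarith
      linarith
    have hlblim : Tendsto (fun n => ‖T‖ - 2 * (t (φ n) * ‖S‖)) atTop (𝓝 ‖T‖) := by
      have h1 : Tendsto (fun n => 2 * (t (φ n) * ‖S‖)) atTop (𝓝 (2 * (0 * ‖S‖))) :=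
        ((htφ.mul_const ‖S‖)).const_mul 2
      simp only [zero_mul, mul_zero] at h1
      simpa using tendsto_const_nhds.sub h1
    exact le_antisymm (le_of_tendsto hTxn (Eventually.of_forall hub))
      (le_of_tendsto_of_tendsto' hlblim hTxn hlb)
  have hxM : x = x₀ ∨ x = -x₀ := by
    have hmem2 : x ∈ {x : X | ‖x‖ = 1 ∧ ‖T x‖ = ‖T‖} := ⟨hx1, hTx⟩
    rw [hM] at hmem2
    simpa using hmem2
  have hgoal1 : Tendsto (fun n => gs (φ n) ((T + t (φ n) • S) (xs (φ n)))) atTop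
      (𝓝 (h (T x))) :=
    heval _ _ ((isBoundedBilinearMap_apply.continuous.tendsto (T, x)).comp
      (hlimop.prodMk_nhds hlimx))
  have hnormlim : Tendsto (fun n => ‖T + t (φ n) • S‖) atTop (𝓝 ‖T‖) :=
    (continuous_norm.tendsto _).comp hlimop
  have hhTx : h (T x) = ‖T‖ := by
    apply tendsto_nhds_unique hgoal1
    have he : (fun n => gs (φ n) ((T + t (φ n) • S) (xs (φ n)))) =
        fun n => ‖T + t (φ n) • S‖ := by
      funext n; rw [hgs2, hxs2]
    rw [he]; exact hnormlim
  have hgoal2 : Tendsto (fun n => gs (φ n) (S (xs (φ n)))) atTop (𝓝 (h (S x))) :=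
    heval _ _ ((S.continuous.tendsto x).comp hlimx)
  have hΦle : Φ S ≤ h (S x) := ge_of_tendsto' hgoal2 (fun n => hstepa (φ n))
  rcases hxM with rfl | rfl
  · have hg' : h = g := hgu h ⟨hh1, by rw [hhTx, hx₀M.2]⟩
    rwa [hg'] at hΦle
  · have hneg : (-h) = g := by
      apply hgu
      refine ⟨by rw [norm_neg, hh1], ?_⟩
      have h5 : h (T (-x₀)) = ‖T‖ := hhTx
      rw [map_neg, map_neg] at h5
      simp only [ContinuousLinearMap.neg_apply]
      rw [hx₀M.2]
      linarith
    have he : h (S (-x₀)) = g (S x₀) := by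
      rw [map_neg, map_neg, ← hneg]
      simp
    rwa [he] at hΦle


end Key

section Main

set_option linter.unusedSectionVars false

variable {X Y : Type*} [NormedAddCommGroup X] [NormedSpace ℝ X] [FiniteDimensional ℝ X]
  [NormedAddCommGroup Y] [NormedSpace ℝ Y] [FiniteDimensional ℝ Y]

lemma mk_support {T : X →L[ℝ] Y} (hT : T ≠ 0) {x : X} (hx : ‖x‖ = 1) (hTx : ‖T x‖ = ‖T‖)
    {g : Y →L[ℝ] ℝ} (hg1 : ‖g‖ = 1) (hg2 : g (T x) = ‖T x‖) :
    ‖g.comp (ContinuousLinearMap.apply ℝ Y x)‖ = 1 ∧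
      (g.comp (ContinuousLinearMap.apply ℝ Y x)) T = ‖T‖ := by
  set Φ := g.comp (ContinuousLinearMap.apply ℝ Y x) with hΦ
  have happ : ∀ S : X →L[ℝ] Y, Φ S = g (S x) := fun S => rfl
  have hval : Φ T = ‖T‖ := by rw [happ, hg2, hTx]
  have hle : ‖Φ‖ ≤ 1 := by
    refine ContinuousLinearMap.opNorm_le_bound _ zero_le_one fun S => ?_
    rw [one_mul, happ]
    calc ‖g (S x)‖ ≤ ‖g‖ * ‖S x‖ := g.le_opNorm _
      _ = ‖S x‖ := by rw [hg1, one_mul]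
      _ ≤ ‖S‖ * ‖x‖ := S.le_opNorm _
      _ = ‖S‖ := by rw [hx, mul_one]
  have hTpos : (0:ℝ) < ‖T‖ := norm_pos_iff.2 hT
  refine ⟨le_antisymm hle ?_, hval⟩
  have h1 : ‖T‖ = ‖Φ T‖ := by rw [hval, Real.norm_eq_abs, abs_of_pos hTpos]
  have h2 : 1 * ‖T‖ ≤ ‖Φ‖ * ‖T‖ := by
    rw [one_mul]
    calc ‖T‖ = ‖Φ T‖ := h1
      _ ≤ ‖Φ‖ * ‖T‖ := Φ.le_opNorm T
  exact le_of_mul_le_mul_right h2 hTpos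

theorem stmt8' (T : X →L[ℝ] Y) (hT : T ≠ 0) :
    (∃! Φ : (X →L[ℝ] Y) →L[ℝ] ℝ, ‖Φ‖ = 1 ∧ Φ T = ‖T‖) ↔
      ∃ x₀ : X, ‖x₀‖ = 1 ∧
        {x : X | ‖x‖ = 1 ∧ ‖T x‖ = ‖T‖} = {x₀, -x₀} ∧
        (∃! g : Y →L[ℝ] ℝ, ‖g‖ = 1 ∧ g (T x₀) = ‖T x₀‖) := by
  obtain ⟨z, hz⟩ : ∃ z : X, T z ≠ 0 := by
    by_contra hcon; push_neg at hcon
    exact hT (ContinuousLinearMap.ext fun z => by simp [hcon z])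
  have : Nontrivial X := nontrivial_of_ne z 0 (fun hzz => hz (by simp [hzz]))
  have : Nontrivial Y := nontrivial_of_ne (T z) 0 hz
  constructor
  · rintro ⟨Φ, ⟨hΦ1, hΦ2⟩, hΦu⟩
    obtain ⟨x₀, hx₀, hTx₀⟩ := exists_norm_attain T
    have hTx₀ne : T x₀ ≠ 0 := by
      rw [← norm_ne_zero_iff, hTx₀]
      exact norm_ne_zero_iff.2 hT
    obtain ⟨g, hg1, hg2⟩ := exists_dual_vector ℝ (T x₀) (norm_ne_zero_iff.2 hTx₀ne)
    have hg2' : g (T x₀) = ‖T x₀‖ := by simpa using hg2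
    have hguniq : ∀ g' : Y →L[ℝ] ℝ, ‖g'‖ = 1 ∧ g' (T x₀) = ‖T x₀‖ → g' = g := by
      rintro g' ⟨hg1', hg2''⟩
      have hx₀ne : x₀ ≠ 0 := by rw [← norm_ne_zero_iff, hx₀]; exact one_ne_zero
      obtain ⟨f, hf1, hf2⟩ := exists_dual_vector ℝ x₀ (norm_ne_zero_iff.2 hx₀ne)
      have hfx : f x₀ = 1 := by rw [show f x₀ = ‖x₀‖ by simpa using hf2, hx₀]
      have e1 := mk_support hT hx₀ hTx₀ hg1 hg2'
      have e2 := mk_support hT hx₀ hTx₀ hg1' hg2''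
      have h12 : g'.comp (ContinuousLinearMap.apply ℝ Y x₀) =
          g.comp (ContinuousLinearMap.apply ℝ Y x₀) := by
        rw [hΦu _ e2, hΦu _ e1]
      ext y
      have happ := congrArg (fun Ψ : (X →L[ℝ] Y) →L[ℝ] ℝ => Ψ (f.smulRight y)) h12
      simp only [ContinuousLinearMap.comp_apply, ContinuousLinearMap.apply_apply,
        ContinuousLinearMap.smulRight_apply] at happ
      rwa [hfx, one_smul] at happ
    refine ⟨x₀, hx₀, ?_, g, ⟨hg1, hg2'⟩, hguniq⟩
    ext x₁
    simp only [Set.mem_setOf_eq, Set.mem_insert_iff, Set.mem_singleton_iff]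
    constructor
    · rintro ⟨hx₁, hTx₁⟩
      by_contra hcon
      push_neg at hcon
      obtain ⟨hne1, hne2⟩ := hcon
      have hspan : x₀ ∉ Submodule.span ℝ {x₁} := by
        intro hmem
        obtain ⟨c, hc⟩ := Submodule.mem_span_singleton.1 hmem
        have habs : |c| = 1 := by
          have hcc : ‖c • x₁‖ = 1 := by rw [hc, hx₀]
          rwa [norm_smul, hx₁, mul_one, Real.norm_eq_abs] at hcc
        rcases (abs_eq (le_of_lt one_pos)).1 habs with rfl | rfl
        · exact hne1 (by rw [← hc, one_smul])
        · refine hne2 ?_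
          rw [← hc]; simp
      obtain ⟨f₀, hf₀x, hf₀map⟩ := Submodule.exists_dual_map_eq_bot_of_notMem hspan inferInstance
      have hf₀x₁ : f₀ x₁ = 0 := by
        have hmm : f₀ x₁ ∈ Submodule.map f₀ (Submodule.span ℝ {x₁}) :=
          Submodule.mem_map_of_mem (Submodule.mem_span_singleton_self x₁)
        rw [hf₀map] at hmm
        simpa using hmm
      set f := LinearMap.toContinuousLinearMap ((f₀ x₀)⁻¹ • f₀) with hfdef
      have hfx₀ : f x₀ = 1 := by
        simp [hfdef, LinearMap.smul_apply, smul_eq_mul, inv_mul_cancel₀ hf₀x]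
      have hfx₁ : f x₁ = 0 := by simp [hfdef, hf₀x₁]
      have hTx₁ne : T x₁ ≠ 0 := by
        rw [← norm_ne_zero_iff, hTx₁]
        exact norm_ne_zero_iff.2 hT
      obtain ⟨g₁, hg₁1, hg₁2⟩ := exists_dual_vector ℝ (T x₁) (norm_ne_zero_iff.2 hTx₁ne)
      have e0 := mk_support hT hx₀ hTx₀ hg1 hg2'
      have e1 := mk_support hT hx₁ hTx₁ hg₁1 (by simpa using hg₁2)
      have h01 : g₁.comp (ContinuousLinearMap.apply ℝ Y x₁) =
          g.comp (ContinuousLinearMap.apply ℝ Y x₀) := by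
        rw [hΦu _ e1, hΦu _ e0]
      have happ := congrArg (fun Ψ : (X →L[ℝ] Y) →L[ℝ] ℝ => Ψ (f.smulRight (T x₀))) h01
      simp only [ContinuousLinearMap.comp_apply, ContinuousLinearMap.apply_apply,
        ContinuousLinearMap.smulRight_apply] at happ
      rw [hfx₁, hfx₀, zero_smul, one_smul, map_zero, hg2'] at happ
      exact (norm_pos_iff.2 hTx₀ne).ne happ
    · rintro (rfl | rfl)
      · exact ⟨hx₀, hTx₀⟩
      · exact ⟨by rw [norm_neg, hx₀], by rw [map_neg, norm_neg, hTx₀]⟩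
  · rintro ⟨x₀, hx₀, hM, g, ⟨hg1, hg2⟩, hgu⟩
    have hgu' : ∀ g' : Y →L[ℝ] ℝ, ‖g'‖ = 1 ∧ g' (T x₀) = ‖T x₀‖ → g' = g := hgu
    have hx₀M : ‖T x₀‖ = ‖T‖ := by
      have hmm : x₀ ∈ {x : X | ‖x‖ = 1 ∧ ‖T x‖ = ‖T‖} := by rw [hM]; simp
      exact hmm.2
    have e0 := mk_support hT hx₀ hx₀M hg1 hg2
    refine ⟨g.comp (ContinuousLinearMap.apply ℝ Y x₀), e0, ?_⟩
    rintro Φ ⟨hΦ1, hΦ2⟩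
    ext S
    have h1 := key hT hM hg1 hg2 hgu' hΦ1 hΦ2 S
    have h2 := key hT hM hg1 hg2 hgu' hΦ1 hΦ2 (-S)
    rw [map_neg] at h2
    simp only [ContinuousLinearMap.neg_apply, map_neg] at h2
    show Φ S = g (S x₀)
    linarith

end Main

/-- `T ∈ B(X,Y)` (finite-dimensional) is smooth iff `M_T = {x₀, -x₀}`
for some unit vector `x₀` and `Tx₀` is smooth in `Y`. -/
theorem stmt8 {X Y : Type*} [NormedAddCommGroup X] [NormedSpace ℝ X] [FiniteDimensional ℝ X]
    [NormedAddCommGroup Y] [NormedSpace ℝ Y] [FiniteDimensional ℝ Y]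
    (T : X →L[ℝ] Y) (hT : T ≠ 0) :
    (∃! Φ : (X →L[ℝ] Y) →L[ℝ] ℝ, ‖Φ‖ = 1 ∧ Φ T = ‖T‖) ↔
      ∃ x₀ : X, ‖x₀‖ = 1 ∧
        {x : X | ‖x‖ = 1 ∧ ‖T x‖ = ‖T‖} = {x₀, -x₀} ∧
        (∃! g : Y →L[ℝ] ℝ, ‖g‖ = 1 ∧ g (T x₀) = ‖T x₀‖) := stmt8' T hT
end

section
/- Let X and Y be finite-dimensional real Banach spaces and T ∈ B(X,Y) nonzero. If M_T contains two linearly independent points x and y, then T is not a smooth point of B(X,Y). -/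
set_option maxHeartbeats 1000000


/-- If `M_T` contains two linearly independent points, then `T`
is not a smooth point of `B(X,Y)`. -/
theorem stmt10 {X Y : Type*} [NormedAddCommGroup X] [NormedSpace ℝ X] [FiniteDimensional ℝ X]
    [NormedAddCommGroup Y] [NormedSpace ℝ Y] [FiniteDimensional ℝ Y]
    (T : X →L[ℝ] Y) (hT : T ≠ 0) (x y : X)
    (hx : ‖x‖ = 1 ∧ ‖T x‖ = ‖T‖) (hy : ‖y‖ = 1 ∧ ‖T y‖ = ‖T‖)
    (hind : LinearIndependent ℝ ![x, y]) :
    ¬ ∃! Φ : (X →L[ℝ] Y) →L[ℝ] ℝ, ‖Φ‖ = 1 ∧ Φ T = ‖T‖ := by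
  rintro ⟨Φ, _, huniq⟩
  obtain ⟨hx1, hx2⟩ := hx
  obtain ⟨hy1, hy2⟩ := hy
  have hTpos : 0 < ‖T‖ := norm_pos_iff.mpr hT
  have hTx : T x ≠ 0 := by rw [← norm_ne_zero_iff, hx2]; exact hTpos.ne'
  have hTy : T y ≠ 0 := by rw [← norm_ne_zero_iff, hy2]; exact hTpos.ne'
  obtain ⟨f, hf1, hf2⟩ := exists_dual_vector ℝ (T x) (norm_ne_zero_iff.mpr hTx)
  obtain ⟨g, hg1, hg2⟩ := exists_dual_vector ℝ (T y) (norm_ne_zero_iff.mpr hTy)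
  -- the two candidate support functionals
  set Φx : (X →L[ℝ] Y) →L[ℝ] ℝ :=
    f.comp ((ContinuousLinearMap.apply ℝ Y : X →L[ℝ] ((X →L[ℝ] Y) →L[ℝ] Y)) x) with hΦx
  set Φy : (X →L[ℝ] Y) →L[ℝ] ℝ :=
    g.comp ((ContinuousLinearMap.apply ℝ Y : X →L[ℝ] ((X →L[ℝ] Y) →L[ℝ] Y)) y) with hΦy
  have hΦxa : ∀ S : X →L[ℝ] Y, Φx S = f (S x) := fun S => rfl
  have hΦya : ∀ S : X →L[ℝ] Y, Φy S = g (S y) := fun S => rfl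
  have norm_le : ∀ (φ : Y →L[ℝ] ℝ) (z : X), ‖φ‖ = 1 → ‖z‖ = 1 →
      ‖φ.comp ((ContinuousLinearMap.apply ℝ Y : X →L[ℝ] ((X →L[ℝ] Y) →L[ℝ] Y)) z)‖ ≤ 1 := by
    intro φ z hφ hz
    refine ContinuousLinearMap.opNorm_le_bound _ zero_le_one (fun S => ?_)
    have h1 := φ.le_opNorm (S z)
    have h2 := S.le_opNorm z
    rw [hφ] at h1; rw [hz] at h2
    show ‖φ (S z)‖ ≤ 1 * ‖S‖
    nlinarith [norm_nonneg (S z), norm_nonneg S]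
  have hΦxT : Φx T = ‖T‖ := by rw [hΦxa, hf2, hx2]; norm_num
  have hΦyT : Φy T = ‖T‖ := by rw [hΦya, hg2, hy2]; norm_num
  have hnx : ‖Φx‖ = 1 := by
    refine le_antisymm (norm_le f x hf1 hx1) ?_
    have := Φx.le_opNorm T
    rw [hΦxT, Real.norm_of_nonneg hTpos.le] at this
    nlinarith
  have hny : ‖Φy‖ = 1 := by
    refine le_antisymm (norm_le g y hg1 hy1) ?_
    have := Φy.le_opNorm T
    rw [hΦyT, Real.norm_of_nonneg hTpos.le] at this
    nlinarith
  have heq : Φx = Φy := (huniq Φx ⟨hnx, hΦxT⟩).trans (huniq Φy ⟨hny, hΦyT⟩).symm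
  -- construct S with S x = T x, S y = 0
  have hxy : x ∉ Submodule.span ℝ ({y} : Set X) := by
    rw [Submodule.mem_span_singleton]
    rintro ⟨a, ha⟩
    exact (linearIndependent_fin2.mp hind).2 a ha
  obtain ⟨φ, hφx, hφy⟩ := Submodule.exists_dual_map_eq_bot_of_notMem hxy inferInstance
  have hφy' : φ y = 0 := by
    have : φ y ∈ (Submodule.span ℝ ({y} : Set X)).map φ :=
      Submodule.mem_map_of_mem (Submodule.mem_span_singleton_self y)
    rw [hφy] at this
    simpa using this
  set ψ : X →ₗ[ℝ] ℝ := (φ x)⁻¹ • φ with hψ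
  set S : X →L[ℝ] Y := LinearMap.toContinuousLinearMap (ψ.smulRight (T x)) with hS
  have hSx : S x = T x := by
    simp [hS, hψ, LinearMap.smulRight_apply, inv_mul_cancel₀ hφx]
  have hSy : S y = 0 := by
    simp [hS, hψ, LinearMap.smulRight_apply, hφy']
  have h1 : Φx S = ‖T‖ := by rw [hΦxa, hSx, hf2, hx2]; norm_num
  have h2 : Φy S = 0 := by rw [hΦya, hSy, map_zero]
  rw [heq, h2] at h1
  exact hTpos.ne h1
end

section
/- Every nonzero left-symmetric point T of B(ℓ_∞^n, ℓ_1^m) over ℝ is a smooth point of B(ℓ_∞^n, ℓ_1^m). -/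
open ENNReal

namespace Stmt11

noncomputable abbrev Xs (n : ℕ) := PiLp ⊤ (fun _ : Fin n => ℝ)
noncomputable abbrev Ys (m : ℕ) := PiLp 1 (fun _ : Fin m => ℝ)
noncomputable abbrev OP (n m : ℕ) := Xs n →L[ℝ] Ys m

variable {n m : ℕ}

noncomputable def sg (b : Bool) : ℝ := if b then 1 else -1

lemma sg_abs (b : Bool) : |sg b| = 1 := by cases b <;> simp [sg]

lemma sg_not (b : Bool) : sg (!b) = - sg b := by cases b <;> simp [sg]

lemma sg_mul_self (b : Bool) : sg b * sg b = 1 := by cases b <;> norm_num [sg]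

lemma sg_inj {a b : Bool} (h : sg a = sg b) : a = b := by
  cases a <;> cases b <;> simp [sg] at h ⊢ <;> norm_num at h

noncomputable def sv (b : Fin n → Bool) : Xs n := WithLp.toLp ⊤ (fun j => sg (b j))

lemma sv_apply (b : Fin n → Bool) (j : Fin n) : sv b j = sg (b j) := rfl

lemma norm_sv_le (b : Fin n → Bool) : ‖sv b‖ ≤ 1 := by
  rw [PiLp.norm_eq_ciSup]
  apply Real.iSup_le _ zero_le_one
  intro i
  have : ‖sv b i‖ = |sg (b i)| := rfl
  rw [this, sg_abs]

lemma norm_Y (y : Ys m) : ‖y‖ = ∑ i, |y i| := by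
  rw [PiLp.norm_eq_sum (by norm_num)]
  simp [Real.norm_eq_abs]

noncomputable def phi (b : Fin n → Bool) (d : Fin m → Bool) (S : OP n m) : ℝ :=
  ∑ i, sg (d i) * (S (sv b)) i

lemma abs_phi_le (b : Fin n → Bool) (d : Fin m → Bool) (S : OP n m) :
    |phi b d S| ≤ ‖S‖ := by
  have h1 : |phi b d S| ≤ ∑ i, |(S (sv b)) i| := by
    refine (Finset.abs_sum_le_sum_abs _ _).trans (le_of_eq ?_)
    exact Finset.sum_congr rfl fun i _ => by rw [abs_mul, sg_abs, one_mul]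
  have h2 : ∑ i, |(S (sv b)) i| = ‖S (sv b)‖ := (norm_Y _).symm
  have h3 : ‖S (sv b)‖ ≤ ‖S‖ * ‖sv b‖ := S.le_opNorm _
  have h4 : ‖S‖ * ‖sv b‖ ≤ ‖S‖ * 1 :=
    mul_le_mul_of_nonneg_left (norm_sv_le b) (norm_nonneg S)
  linarith

lemma phi_le (b : Fin n → Bool) (d : Fin m → Bool) (S : OP n m) : phi b d S ≤ ‖S‖ :=
  le_trans (le_abs_self _) (abs_phi_le b d S)

lemma phi_add (b : Fin n → Bool) (d : Fin m → Bool) (S R : OP n m) :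
    phi b d (S + R) = phi b d S + phi b d R := by
  unfold phi
  rw [← Finset.sum_add_distrib]
  refine Finset.sum_congr rfl fun i _ => ?_
  rw [ContinuousLinearMap.add_apply, PiLp.add_apply]
  ring

lemma phi_smul (b : Fin n → Bool) (d : Fin m → Bool) (c : ℝ) (S : OP n m) :
    phi b d (c • S) = c * phi b d S := by
  unfold phi
  rw [Finset.mul_sum]
  refine Finset.sum_congr rfl fun i _ => ?_
  rw [ContinuousLinearMap.smul_apply, PiLp.smul_apply, smul_eq_mul]
  ring

lemma phi_add_smul (b : Fin n → Bool) (d : Fin m → Bool) (c : ℝ) (S R : OP n m) :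
    phi b d (S + c • R) = phi b d S + c * phi b d R := by
  rw [phi_add, phi_smul]

lemma phi_not_right (b : Fin n → Bool) (d : Fin m → Bool) (S : OP n m) :
    phi b (fun i => !(d i)) S = - phi b d S := by
  unfold phi
  rw [← Finset.sum_neg_distrib]
  exact Finset.sum_congr rfl fun i _ => by rw [sg_not]; ring

lemma sv_not (b : Fin n → Bool) : sv (fun j => !(b j)) = - sv b := by
  ext j
  have h : (-(sv b)) j = -(sv b j) := rfl
  rw [h, sv_apply, sv_apply, sg_not]

lemma phi_not_not (b : Fin n → Bool) (d : Fin m → Bool) (S : OP n m) :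
    phi (fun j => !(b j)) (fun i => !(d i)) S = phi b d S := by
  unfold phi
  rw [sv_not, map_neg]
  refine Finset.sum_congr rfl fun i _ => ?_
  rw [sg_not, PiLp.neg_apply]
  ring

/-- The maximum of `phi` over all sign patterns. -/
noncomputable def NN (T : OP n m) : ℝ :=
  Finset.univ.sup' Finset.univ_nonempty
    (fun p : (Fin n → Bool) × (Fin m → Bool) => phi p.1 p.2 T)

lemma phi_le_NN (b : Fin n → Bool) (d : Fin m → Bool) (T : OP n m) :
    phi b d T ≤ NN T :=
  Finset.le_sup' (fun p : (Fin n → Bool) × (Fin m → Bool) => phi p.1 p.2 T)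
    (Finset.mem_univ (b, d))

lemma NN_le (T : OP n m) : NN T ≤ ‖T‖ :=
  Finset.sup'_le _ _ fun p _ => phi_le p.1 p.2 T

lemma NN_nonneg (T : OP n m) : 0 ≤ NN T := by
  have h1 := phi_le_NN (fun _ => true) (fun _ => true) T
  have h2 := phi_le_NN (fun _ => true) (fun i => !(true : Bool)) T
  rw [phi_not_right] at h2
  linarith

noncomputable def ev (j : Fin n) : Xs n := WithLp.toLp ⊤ (Pi.single j 1)

lemma expand (g : Xs n →ₗ[ℝ] ℝ) (x : Xs n) : g x = ∑ j, x j * g (ev j) := by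
  have hx : x = ∑ j, x j • ev j := by
    ext i
    have h : (∑ j, x j • ev j) i = ∑ j, (x j • ev j) i := by
      simp only [WithLp.ofLp_sum, Finset.sum_apply]
    rw [h]
    simp [ev, Pi.single_apply]
  calc g x = g (∑ j, x j • ev j) := by rw [← hx]
    _ = ∑ j, x j * g (ev j) := by rw [map_sum]; simp

lemma g_le (g : Xs n →ₗ[ℝ] ℝ) (x : Xs n) :
    ∃ b : Fin n → Bool, g x ≤ ‖x‖ * g (sv b) := by
  classical
  refine ⟨fun j => decide (0 ≤ g (ev j)), ?_⟩
  have hsv : g (sv (fun j => decide (0 ≤ g (ev j)))) =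
      ∑ j, sg (decide (0 ≤ g (ev j))) * g (ev j) := by
    rw [expand g (sv _)]
    rfl
  rw [hsv, expand g x, Finset.mul_sum]
  apply Finset.sum_le_sum
  intro j _
  have h1 : ‖x j‖ ≤ ‖x‖ := by
    rw [PiLp.norm_eq_ciSup]
    exact le_ciSup (f := fun i => ‖x i‖) (Set.finite_range _).bddAbove j
  have h2 : sg (decide (0 ≤ g (ev j))) * g (ev j) = |g (ev j)| := by
    rcases le_or_gt 0 (g (ev j)) with h | h
    · simp [sg, h, abs_of_nonneg h]
    · simp [sg, not_le.mpr h, abs_of_neg h]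
  rw [h2]
  calc x j * g (ev j) ≤ |x j * g (ev j)| := le_abs_self _
    _ = |x j| * |g (ev j)| := abs_mul _ _
    _ ≤ ‖x‖ * |g (ev j)| := mul_le_mul_of_nonneg_right h1 (abs_nonneg _)

noncomputable def glm (T : OP n m) (d : Fin m → Bool) : Xs n →ₗ[ℝ] ℝ where
  toFun x := ∑ i, sg (d i) * (T x) i
  map_add' x y := by
    rw [← Finset.sum_add_distrib]
    refine Finset.sum_congr rfl fun i _ => ?_
    rw [map_add, PiLp.add_apply]
    ring
  map_smul' c x := by
    show ∑ i, sg (d i) * (T (c • x)) i = (RingHom.id ℝ c) • ∑ i, sg (d i) * (T x) i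
    rw [RingHom.id_apply, smul_eq_mul, Finset.mul_sum]
    refine Finset.sum_congr rfl fun i _ => ?_
    rw [map_smul, PiLp.smul_apply, smul_eq_mul]
    ring

lemma norm_eq_NN (T : OP n m) : ‖T‖ = NN T := by
  refine le_antisymm ?_ (NN_le T)
  apply ContinuousLinearMap.opNorm_le_bound T (NN_nonneg T)
  intro x
  classical
  set d : Fin m → Bool := fun i => decide (0 ≤ (T x) i) with hd
  have h1 : ‖T x‖ = glm T d x := by
    rw [norm_Y]
    refine Finset.sum_congr rfl fun i _ => ?_
    show |(T x) i| = sg (d i) * (T x) i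
    rcases le_or_gt 0 ((T x) i) with h | h
    · simp [hd, sg, h, abs_of_nonneg h]
    · simp [hd, sg, not_le.mpr h, abs_of_neg h]
  obtain ⟨b, hb⟩ := g_le (glm T d) x
  have h2 : glm T d (sv b) = phi b d T := rfl
  have h3 : phi b d T ≤ NN T := phi_le_NN b d T
  have h4 : ‖x‖ * glm T d (sv b) ≤ ‖x‖ * NN T := by
    rw [h2]
    exact mul_le_mul_of_nonneg_left h3 (norm_nonneg x)
  rw [h1]
  calc glm T d x ≤ ‖x‖ * glm T d (sv b) := hb
    _ ≤ ‖x‖ * NN T := h4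
    _ = NN T * ‖x‖ := mul_comm _ _

/-- Balancing weights. -/
lemma balance {k : ℕ} (a c : Fin k → Bool) (h1 : ∃ j, a j = c j) (h2 : ∃ j, a j ≠ c j) :
    ∃ w : Fin k → ℝ, (∀ j, 0 < w j) ∧ ∑ j, (sg (a j) * w j) * sg (c j) = 0 := by
  classical
  set P := Finset.univ.filter (fun j : Fin k => a j = c j) with hP
  set Q := Finset.univ.filter (fun j : Fin k => ¬ a j = c j) with hQ
  have hPne : P.Nonempty := h1.imp fun j hj => Finset.mem_filter.2 ⟨Finset.mem_univ _, hj⟩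
  have hQne : Q.Nonempty := h2.imp fun j hj => Finset.mem_filter.2 ⟨Finset.mem_univ _, hj⟩
  have hPpos : (0:ℝ) < P.card := by exact_mod_cast Finset.card_pos.2 hPne
  have hQpos : (0:ℝ) < Q.card := by exact_mod_cast Finset.card_pos.2 hQne
  refine ⟨fun j => if a j = c j then (P.card : ℝ)⁻¹ else (Q.card : ℝ)⁻¹,
    fun j => by dsimp only; split <;> positivity, ?_⟩
  have key : ∀ j, (sg (a j) * (if a j = c j then (P.card : ℝ)⁻¹ else (Q.card : ℝ)⁻¹)) * sg (c j)
      = if a j = c j then (P.card : ℝ)⁻¹ else -(Q.card : ℝ)⁻¹ := by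
    intro j
    by_cases h : a j = c j
    · rw [if_pos h, if_pos h, h]
      linear_combination ((P.card : ℝ))⁻¹ * sg_mul_self (c j)
    · rw [if_neg h, if_neg h]
      have hs : sg (a j) = - sg (c j) := by
        cases hcj : c j <;> cases haj : a j <;> simp_all [sg]
      rw [hs]
      linear_combination (-((Q.card : ℝ))⁻¹) * sg_mul_self (c j)
  rw [Finset.sum_congr rfl (fun j _ => key j), Finset.sum_ite]
  rw [Finset.sum_const, Finset.sum_const, ← hP, ← hQ, nsmul_eq_mul, nsmul_eq_mul]
  rw [mul_inv_cancel₀ (ne_of_gt hPpos)]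
  rw [mul_neg, mul_inv_cancel₀ (ne_of_gt hQpos)]
  ring

/-- Rigidity: if a signed sum achieves the maximal value, the signs are determined. -/
lemma sign_rigid {k : ℕ} (a b : Fin k → Bool) (v : Fin k → ℝ)
    (hv : ∀ j, 0 < sg (a j) * v j)
    (h : ∑ j, v j * sg (b j) = ∑ j, sg (a j) * v j) : b = a := by
  have habs : ∀ j, |v j| = sg (a j) * v j := by
    intro j
    rw [← abs_of_pos (hv j), abs_mul, sg_abs, one_mul]
  have hterm : ∀ j ∈ Finset.univ, v j * sg (b j) ≤ sg (a j) * v j := by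
    intro j _
    calc v j * sg (b j) ≤ |v j * sg (b j)| := le_abs_self _
      _ = |v j| := by rw [abs_mul, sg_abs, mul_one]
      _ = sg (a j) * v j := habs j
  have heq := (Finset.sum_eq_sum_iff_of_le hterm).1 h
  funext j
  have hj := heq j (Finset.mem_univ j)
  have hvj : v j ≠ 0 := by
    intro h0
    have := hv j
    rw [h0, mul_zero] at this
    exact lt_irrefl _ this
  have : sg (b j) = sg (a j) := by
    have h' : v j * sg (b j) = v j * sg (a j) := by linarith [hj]
    exact mul_left_cancel₀ hvj h'
  exact (sg_inj this)

noncomputable def rk1lin (u : Fin m → ℝ) (v : Fin n → ℝ) : Xs n →ₗ[ℝ] Ys m where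
  toFun x := (∑ j, v j * x j) • (show Ys m from WithLp.toLp 1 u)
  map_add' x y := by
    show (∑ j, v j * (x + y) j) • (show Ys m from WithLp.toLp 1 u)
        = (∑ j, v j * x j) • (show Ys m from WithLp.toLp 1 u) + (∑ j, v j * y j) • (show Ys m from WithLp.toLp 1 u)
    rw [← add_smul]
    congr 1
    rw [← Finset.sum_add_distrib]
    refine Finset.sum_congr rfl fun j _ => ?_
    rw [PiLp.add_apply]
    ring
  map_smul' c x := by
    show (∑ j, v j * (c • x) j) • (show Ys m from WithLp.toLp 1 u)
        = (RingHom.id ℝ c) • (∑ j, v j * x j) • (show Ys m from WithLp.toLp 1 u)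
    rw [RingHom.id_apply, smul_smul]
    congr 1
    rw [Finset.mul_sum]
    refine Finset.sum_congr rfl fun j _ => ?_
    rw [PiLp.smul_apply, smul_eq_mul]
    ring

noncomputable def rk1 (u : Fin m → ℝ) (v : Fin n → ℝ) : OP n m :=
  LinearMap.toContinuousLinearMap (rk1lin u v)

lemma rk1_apply (u : Fin m → ℝ) (v : Fin n → ℝ) (x : Xs n) :
    rk1 u v x = (∑ j, v j * x j) • (show Ys m from WithLp.toLp 1 u) := rfl

lemma phi_rk1 (b : Fin n → Bool) (d : Fin m → Bool) (u : Fin m → ℝ) (v : Fin n → ℝ) :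
    phi b d (rk1 u v) = (∑ j, v j * sg (b j)) * (∑ i, sg (d i) * u i) := by
  unfold phi
  rw [Finset.mul_sum]
  refine Finset.sum_congr rfl fun i _ => ?_
  have h : (rk1 u v (sv b)) i = (∑ j, v j * sg (b j)) * u i := by
    rw [rk1_apply, PiLp.smul_apply, smul_eq_mul]
    rfl
  rw [h]
  ring

lemma nonempty_of_norm_pos {T : OP n m} (p : (Fin n → Bool) × (Fin m → Bool))
    (hT : 0 < ‖T‖) (hp : phi p.1 p.2 T = ‖T‖) :
    Nonempty (Fin n) ∧ Nonempty (Fin m) := by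
  constructor
  · by_contra h
    have hie : IsEmpty (Fin n) := not_nonempty_iff.1 h
    have hsv : sv p.1 = 0 := PiLp.ext fun j => isEmptyElim j
    have hz : phi p.1 p.2 T = 0 := by
      unfold phi
      rw [hsv, map_zero]
      refine Finset.sum_eq_zero fun i _ => ?_
      rw [PiLp.zero_apply, mul_zero]
    linarith
  · by_contra h
    have hie : IsEmpty (Fin m) := not_nonempty_iff.1 h
    have hz : phi p.1 p.2 T = 0 := by
      unfold phi
      rw [Finset.univ_eq_empty, Finset.sum_empty]
    linarith

set_option maxHeartbeats 2000000 in
lemma common {T : OP n m}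
    (hls : ∀ S : OP n m, (∀ lam : ℝ, ‖T + lam • S‖ ≥ ‖T‖) → (∀ lam : ℝ, ‖S + lam • T‖ ≥ ‖S‖))
    (hT : 0 < ‖T‖)
    (p q : (Fin n → Bool) × (Fin m → Bool))
    (hp : phi p.1 p.2 T = ‖T‖) (hq : phi q.1 q.2 T = ‖T‖)
    (u : Fin m → ℝ) (v : Fin n → ℝ)
    (hv : ∀ j, 0 < sg (p.1 j) * v j) (hu : ∀ i, 0 < sg (p.2 i) * u i)
    (horth : phi q.1 q.2 (rk1 u v) = 0) : False := by
  classical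
  obtain ⟨hnN, hmN⟩ := nonempty_of_norm_pos p hT hp
  haveI := hnN
  haveI := hmN
  set S := rk1 u v with hS
  set A := ∑ j, sg (p.1 j) * v j with hA
  set B := ∑ i, sg (p.2 i) * u i with hB
  have hApos : 0 < A := Finset.sum_pos (fun j _ => hv j) Finset.univ_nonempty
  have hBpos : 0 < B := Finset.sum_pos (fun i _ => hu i) Finset.univ_nonempty
  have habsA : ∀ b : Fin n → Bool, |∑ j, v j * sg (b j)| ≤ A := by
    intro b
    refine (Finset.abs_sum_le_sum_abs _ _).trans (le_of_eq ?_)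
    refine Finset.sum_congr rfl fun j _ => ?_
    rw [abs_mul, sg_abs, mul_one, ← abs_of_pos (hv j), abs_mul, sg_abs, one_mul]
  have habsB : ∀ d : Fin m → Bool, |∑ i, sg (d i) * u i| ≤ B := by
    intro d
    refine (Finset.abs_sum_le_sum_abs _ _).trans (le_of_eq ?_)
    refine Finset.sum_congr rfl fun i _ => ?_
    rw [abs_mul, sg_abs, one_mul, ← abs_of_pos (hu i), abs_mul, sg_abs, one_mul]
  have hSp : phi p.1 p.2 S = A * B := by
    rw [hS, phi_rk1]
    congr 1
    exact Finset.sum_congr rfl fun j _ => mul_comm _ _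
  have hTS : ∀ lam : ℝ, ‖T + lam • S‖ ≥ ‖T‖ := by
    intro lam
    have h := phi_le q.1 q.2 (T + lam • S)
    rw [phi_add_smul, hq, horth, mul_zero, add_zero] at h
    exact h
  have hST := hls S hTS
  have hphiS_le : ∀ r : (Fin n → Bool) × (Fin m → Bool), phi r.1 r.2 S ≤ A * B := by
    intro r
    rw [hS, phi_rk1]
    calc (∑ j, v j * sg (r.1 j)) * (∑ i, sg (r.2 i) * u i)
        ≤ |(∑ j, v j * sg (r.1 j)) * (∑ i, sg (r.2 i) * u i)| := le_abs_self _
      _ = |∑ j, v j * sg (r.1 j)| * |∑ i, sg (r.2 i) * u i| := abs_mul _ _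
      _ ≤ A * B := mul_le_mul (habsA _) (habsB _) (abs_nonneg _) hApos.le
  have hnormS : ‖S‖ = A * B := by
    rw [norm_eq_NN]
    refine le_antisymm (Finset.sup'_le _ _ fun r _ => hphiS_le r) ?_
    rw [← hSp]
    exact phi_le_NN p.1 p.2 S
  have hact : ∀ r : (Fin n → Bool) × (Fin m → Bool),
      phi r.1 r.2 S = A * B → phi r.1 r.2 T = ‖T‖ := by
    intro r hr
    rw [hS, phi_rk1] at hr
    set Ar := ∑ j, v j * sg (r.1 j) with hAr
    set Br := ∑ i, sg (r.2 i) * u i with hBr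
    have h1 : |Ar| ≤ A := habsA _
    have h2 : |Br| ≤ B := habsB _
    have h3 : A * B ≤ |Ar| * |Br| := by rw [← abs_mul, hr]; exact le_abs_self _
    have hA' : |Ar| = A := by
      refine le_antisymm h1 ?_
      by_contra hc
      push_neg at hc
      have hlt : |Ar| * |Br| < A * B := by
        apply lt_of_le_of_lt (mul_le_mul_of_nonneg_left h2 (abs_nonneg Ar))
        exact mul_lt_mul_of_pos_right hc hBpos
      linarith
    have hB' : |Br| = B := by
      refine le_antisymm h2 ?_
      by_contra hc
      push_neg at hc
      have hlt : |Ar| * |Br| < A * B := by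
        apply lt_of_le_of_lt (mul_le_mul_of_nonneg_right h1 (abs_nonneg Br))
        exact mul_lt_mul_of_pos_left hc hApos
      linarith
    have hprod : 0 < Ar * Br := by rw [hr]; positivity
    rcases (abs_eq hApos.le).1 hA' with hA1 | hA1
    · have hBrpos : 0 < Br := by
        rcases (abs_eq hBpos.le).1 hB' with hB1 | hB1
        · rw [hB1]; exact hBpos
        · exfalso; rw [hA1, hB1] at hprod; nlinarith
      have hB1 : Br = B := by rw [← abs_of_pos hBrpos, hB']
      have hr1 : r.1 = p.1 := by
        refine sign_rigid p.1 r.1 v hv ?_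
        rw [← hAr, hA1, hA]
      have hr2 : r.2 = p.2 := by
        refine sign_rigid p.2 r.2 u hu ?_
        have hcomm : (∑ i, u i * sg (r.2 i)) = Br := by
          rw [hBr]
          exact Finset.sum_congr rfl fun i _ => mul_comm _ _
        rw [hcomm, hB1, hB]
      rw [hr1, hr2]
      exact hp
    · have hBrneg : Br < 0 := by nlinarith
      have hB1 : Br = -B := by
        have := abs_of_neg hBrneg
        rw [hB'] at this
        linarith
      have hr1 : (fun j => !(r.1 j)) = p.1 := by
        refine sign_rigid p.1 _ v hv ?_
        have hflip : (∑ j, v j * sg (!(r.1 j))) = -Ar := by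
          rw [hAr, ← Finset.sum_neg_distrib]
          exact Finset.sum_congr rfl fun j _ => by rw [sg_not]; ring
        rw [hflip, hA1, hA, neg_neg]
      have hr2 : (fun i => !(r.2 i)) = p.2 := by
        refine sign_rigid p.2 _ u hu ?_
        have hflip : (∑ i, u i * sg (!(r.2 i))) = -Br := by
          rw [hBr, ← Finset.sum_neg_distrib]
          exact Finset.sum_congr rfl fun i _ => by rw [sg_not]; ring
        rw [hflip, hB1, hB, neg_neg]
      have hnn := phi_not_not r.1 r.2 T
      rw [hr1, hr2] at hnn
      rw [← hnn]
      exact hp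
  set F : (Fin n → Bool) × (Fin m → Bool) → ℝ := fun r =>
    if phi r.1 r.2 S = A * B then 1
    else (A * B - phi r.1 r.2 S) / (|phi r.1 r.2 T| + 1) with hF
  have hFpos : ∀ r, 0 < F r := by
    intro r
    rw [hF]
    dsimp only
    split
    · norm_num
    · next hne =>
      apply div_pos
      · have h1 := hphiS_le r
        rcases lt_or_eq_of_le h1 with h | h
        · linarith
        · exact absurd h hne
      · positivity
  set eps := Finset.univ.inf' Finset.univ_nonempty F with heps
  have hepspos : 0 < eps := (Finset.lt_inf'_iff _).2 fun r _ => hFpos r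
  have hcontr : ‖S + (-(eps/2)) • T‖ < ‖S‖ := by
    rw [hnormS, norm_eq_NN]
    refine (Finset.sup'_lt_iff _).2 fun r _ => ?_
    rw [phi_add_smul]
    by_cases hr : phi r.1 r.2 S = A * B
    · rw [hr, hact r hr]
      nlinarith
    · have h1 : eps ≤ F r := Finset.inf'_le _ (Finset.mem_univ r)
      have hFr : F r = (A * B - phi r.1 r.2 S) / (|phi r.1 r.2 T| + 1) := by
        rw [hF]
        exact if_neg hr
      have hden : (0:ℝ) < |phi r.1 r.2 T| + 1 := by positivity
      have h2 : eps * (|phi r.1 r.2 T| + 1) ≤ A * B - phi r.1 r.2 S := by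
        rw [hFr] at h1
        exact (le_div_iff₀ hden).1 h1
      have h3 : (-(eps/2)) * phi r.1 r.2 T ≤ (eps/2) * |phi r.1 r.2 T| := by
        calc (-(eps/2)) * phi r.1 r.2 T ≤ |(-(eps/2)) * phi r.1 r.2 T| := le_abs_self _
          _ = (eps/2) * |phi r.1 r.2 T| := by
              rw [abs_mul, abs_neg, abs_of_pos (by linarith : (0:ℝ) < eps/2)]
      have h4 : phi r.1 r.2 S < A * B := lt_of_le_of_ne (hphiS_le r) hr
      nlinarith [abs_nonneg (phi r.1 r.2 T)]
  have := hST (-(eps/2))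
  linarith

lemma keyA {T : OP n m}
    (hls : ∀ S : OP n m, (∀ lam : ℝ, ‖T + lam • S‖ ≥ ‖T‖) → (∀ lam : ℝ, ‖S + lam • T‖ ≥ ‖S‖))
    (hT : 0 < ‖T‖) (b : Fin n → Bool) (d d' : Fin m → Bool)
    (hp : phi b d T = ‖T‖) (hq : phi b d' T = ‖T‖) (hne : d' ≠ d) : False := by
  classical
  by_cases h2 : d' = fun i => !(d i)
  · rw [h2, phi_not_right] at hq
    linarith
  · have h1ex : ∃ i, d i = d' i := by
      by_contra hc
      push_neg at hc
      apply h2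
      funext i
      have := hc i
      cases hdi : d i <;> cases hdi' : d' i <;> simp_all
    have h2ex : ∃ i, d i ≠ d' i := by
      by_contra hc
      push_neg at hc
      exact hne (funext fun i => (hc i).symm)
    obtain ⟨w, hw, hwsum⟩ := balance d d' h1ex h2ex
    refine common hls hT (b, d) (b, d') hp hq (fun i => sg (d i) * w i) (fun j => sg (b j)) ?_ ?_ ?_
    · intro j
      dsimp only
      rw [sg_mul_self]
      norm_num
    · intro i
      dsimp only
      rw [← mul_assoc, sg_mul_self, one_mul]
      exact hw i
    · rw [phi_rk1]
      dsimp only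
      have hz : (∑ i, sg (d' i) * (sg (d i) * w i)) = 0 := by
        rw [← hwsum]
        exact Finset.sum_congr rfl fun i _ => by ring
      rw [hz, mul_zero]

lemma keyB {T : OP n m}
    (hls : ∀ S : OP n m, (∀ lam : ℝ, ‖T + lam • S‖ ≥ ‖T‖) → (∀ lam : ℝ, ‖S + lam • T‖ ≥ ‖S‖))
    (hT : 0 < ‖T‖)
    (p q : (Fin n → Bool) × (Fin m → Bool))
    (hp : phi p.1 p.2 T = ‖T‖) (hq : phi q.1 q.2 T = ‖T‖)
    (h1 : q.1 ≠ p.1) (h2 : q.1 ≠ fun j => !(p.1 j)) : False := by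
  classical
  have h1ex : ∃ j, p.1 j = q.1 j := by
    by_contra hc
    push_neg at hc
    apply h2
    funext j
    have := hc j
    cases hj : p.1 j <;> cases hj' : q.1 j <;> simp_all
  have h2ex : ∃ j, p.1 j ≠ q.1 j := by
    by_contra hc
    push_neg at hc
    exact h1 (funext fun j => (hc j).symm)
  obtain ⟨w, hw, hwsum⟩ := balance p.1 q.1 h1ex h2ex
  refine common hls hT p q hp hq (fun i => sg (p.2 i)) (fun j => sg (p.1 j) * w j) ?_ ?_ ?_
  · intro j
    rw [← mul_assoc, sg_mul_self, one_mul]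
    exact hw j
  · intro i
    rw [sg_mul_self]
    norm_num
  · rw [phi_rk1]
    rw [show (∑ j, (fun j => sg (p.1 j) * w j) j * sg (q.1 j)) = 0 from hwsum, zero_mul]

lemma key {T : OP n m}
    (hls : ∀ S : OP n m, (∀ lam : ℝ, ‖T + lam • S‖ ≥ ‖T‖) → (∀ lam : ℝ, ‖S + lam • T‖ ≥ ‖S‖))
    (hT : 0 < ‖T‖)
    (p q : (Fin n → Bool) × (Fin m → Bool))
    (hp : phi p.1 p.2 T = ‖T‖) (hq : phi q.1 q.2 T = ‖T‖) :
    ∀ S : OP n m, phi q.1 q.2 S = phi p.1 p.2 S := by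
  classical
  by_cases hb : q.1 = p.1
  · by_cases hd : q.2 = p.2
    · intro S
      rw [hb, hd]
    · exact (keyA hls hT p.1 p.2 q.2 hp (by rw [← hb]; exact hq) hd).elim
  · by_cases hb' : q.1 = fun j => !(p.1 j)
    · have e1 : (fun j => !(q.1 j)) = p.1 := by
        funext j
        rw [congrFun hb' j, Bool.not_not]
      have hq3 : phi p.1 (fun i => !(q.2 i)) T = ‖T‖ := by
        rw [← e1, phi_not_not]
        exact hq
      by_cases hd : (fun i => !(q.2 i)) = p.2
      · intro S
        rw [← phi_not_not q.1 q.2 S, e1, hd]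
      · exact (keyA hls hT p.1 p.2 (fun i => !(q.2 i)) hp hq3 hd).elim
    · exact (keyB hls hT p q hp hq hb hb').elim

noncomputable def philm (b : Fin n → Bool) (d : Fin m → Bool) : OP n m →ₗ[ℝ] ℝ where
  toFun S := phi b d S
  map_add' S R := phi_add b d S R
  map_smul' c S := by
    show phi b d (c • S) = (RingHom.id ℝ c) • phi b d S
    rw [RingHom.id_apply, smul_eq_mul]
    exact phi_smul b d c S

noncomputable def Phi0 (b : Fin n → Bool) (d : Fin m → Bool) : OP n m →L[ℝ] ℝ :=
  LinearMap.mkContinuous (philm b d) 1 (fun S => by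
    rw [one_mul, Real.norm_eq_abs]
    exact abs_phi_le b d S)

lemma Phi0_apply (b : Fin n → Bool) (d : Fin m → Bool) (S : OP n m) :
    Phi0 b d S = phi b d S := rfl

lemma Phi0_norm_le (b : Fin n → Bool) (d : Fin m → Bool) :
    ‖(Phi0 b d : OP n m →L[ℝ] ℝ)‖ ≤ 1 :=
  LinearMap.mkContinuous_norm_le _ zero_le_one _

end Stmt11


open ENNReal

set_option maxHeartbeats 2000000 in
/-- Every nonzero left-symmetric point of `B(ℓ_∞^n, ℓ_1^m)` over
`ℝ` is a smooth point. -/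
theorem stmt11 {n m : ℕ}
    (T : PiLp ⊤ (fun _ : Fin n => ℝ) →L[ℝ] PiLp 1 (fun _ : Fin m => ℝ))
    (hT : T ≠ 0)
    (hls : ∀ S : PiLp ⊤ (fun _ : Fin n => ℝ) →L[ℝ] PiLp 1 (fun _ : Fin m => ℝ),
      (∀ lam : ℝ, ‖T + lam • S‖ ≥ ‖T‖) → (∀ lam : ℝ, ‖S + lam • T‖ ≥ ‖S‖)) :
    ∃! Φ : (PiLp ⊤ (fun _ : Fin n => ℝ) →L[ℝ] PiLp 1 (fun _ : Fin m => ℝ)) →L[ℝ] ℝ,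
      ‖Φ‖ = 1 ∧ Φ T = ‖T‖ := by
  classical
  have hT0 : 0 < ‖T‖ := norm_pos_iff.2 hT
  obtain ⟨p₀, -, hp₀⟩ := Finset.exists_mem_eq_sup' (Finset.univ_nonempty)
    (fun p : (Fin n → Bool) × (Fin m → Bool) => Stmt11.phi p.1 p.2 T)
  have hp : Stmt11.phi p₀.1 p₀.2 T = ‖T‖ := by
    rw [Stmt11.norm_eq_NN]
    exact hp₀.symm
  set Φ := Stmt11.Phi0 p₀.1 p₀.2 with hΦdef
  have hΦT : Φ T = ‖T‖ := hp
  have hΦnorm : ‖Φ‖ = 1 := by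
    refine le_antisymm (Stmt11.Phi0_norm_le _ _) ?_
    have h := Φ.le_opNorm T
    rw [Real.norm_eq_abs, hΦT, abs_of_pos hT0] at h
    nlinarith
  have hagree : ∀ r : (Fin n → Bool) × (Fin m → Bool), Stmt11.phi r.1 r.2 T = ‖T‖ →
      ∀ S, Stmt11.phi r.1 r.2 S = Stmt11.phi p₀.1 p₀.2 S := fun r hr =>
    Stmt11.key hls hT0 p₀ r hp hr
  have hloc : ∀ S : PiLp ⊤ (fun _ : Fin n => ℝ) →L[ℝ] PiLp 1 (fun _ : Fin m => ℝ),
      ∃ lam₀ : ℝ, 0 < lam₀ ∧ ∀ lam : ℝ, |lam| ≤ lam₀ →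
      ‖T + lam • S‖ = ‖T‖ + lam * Stmt11.phi p₀.1 p₀.2 S := by
    intro S
    set c0 := Stmt11.phi p₀.1 p₀.2 S with hc0
    set F : (Fin n → Bool) × (Fin m → Bool) → ℝ := fun r =>
      if Stmt11.phi r.1 r.2 T = ‖T‖ then 1
      else (‖T‖ - Stmt11.phi r.1 r.2 T) / (|Stmt11.phi r.1 r.2 S| + |c0| + 1) with hF
    have hFpos : ∀ r, 0 < F r := by
      intro r
      rw [hF]
      dsimp only
      split
      · norm_num
      · next hne =>
        apply div_pos
        · have h1 : Stmt11.phi r.1 r.2 T ≤ ‖T‖ := Stmt11.phi_le _ _ _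
          rcases lt_or_eq_of_le h1 with h | h
          · linarith
          · exact absurd h hne
        · positivity
    refine ⟨Finset.univ.inf' Finset.univ_nonempty F,
      (Finset.lt_inf'_iff _).2 fun r _ => hFpos r, ?_⟩
    intro lam hlam
    refine le_antisymm ?_ ?_
    · rw [Stmt11.norm_eq_NN]
      refine Finset.sup'_le _ _ fun r _ => ?_
      rw [Stmt11.phi_add_smul]
      by_cases hr : Stmt11.phi r.1 r.2 T = ‖T‖
      · rw [hr, hagree r hr S]
      · have h1 : |lam| ≤ F r := le_trans hlam (Finset.inf'_le _ (Finset.mem_univ r))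
        have hFr : F r = (‖T‖ - Stmt11.phi r.1 r.2 T) / (|Stmt11.phi r.1 r.2 S| + |c0| + 1) := by
          rw [hF]
          exact if_neg hr
        have hden : (0:ℝ) < |Stmt11.phi r.1 r.2 S| + |c0| + 1 := by positivity
        have h2 : |lam| * (|Stmt11.phi r.1 r.2 S| + |c0| + 1) ≤ ‖T‖ - Stmt11.phi r.1 r.2 T := by
          rw [hFr] at h1
          exact (le_div_iff₀ hden).1 h1
        have h3 : lam * Stmt11.phi r.1 r.2 S - lam * c0 ≤
            |lam| * (|Stmt11.phi r.1 r.2 S| + |c0|) := by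
          calc lam * Stmt11.phi r.1 r.2 S - lam * c0
              ≤ |lam * Stmt11.phi r.1 r.2 S - lam * c0| := le_abs_self _
            _ ≤ |lam * Stmt11.phi r.1 r.2 S| + |lam * c0| := by
                rw [sub_eq_add_neg]
                refine (abs_add_le _ _).trans ?_
                rw [abs_neg]
            _ = |lam| * |Stmt11.phi r.1 r.2 S| + |lam| * |c0| := by rw [abs_mul, abs_mul]
            _ = |lam| * (|Stmt11.phi r.1 r.2 S| + |c0|) := by ring
        have h5 := abs_nonneg lam
        nlinarith
    · rw [Stmt11.norm_eq_NN (T + lam • S)]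
      have hmem := Stmt11.phi_le_NN p₀.1 p₀.2 (T + lam • S)
      rw [Stmt11.phi_add_smul, hp] at hmem
      exact hmem
  refine ⟨Φ, ⟨hΦnorm, hΦT⟩, ?_⟩
  rintro Ψ ⟨hΨ1, hΨ2⟩
  ext S
  obtain ⟨l0, hl0, hl⟩ := hloc S
  have hb : ∀ lam : ℝ, |lam| ≤ l0 → lam * Ψ S ≤ lam * Φ S := by
    intro lam hlam
    have h1 : Ψ (T + lam • S) ≤ ‖Ψ‖ * ‖T + lam • S‖ :=
      le_trans (le_abs_self _) (by rw [← Real.norm_eq_abs]; exact Ψ.le_opNorm _)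
    simp only [hΨ1, one_mul, map_add, map_smul, smul_eq_mul, hΨ2, hl lam hlam] at h1
    have hrfl : Φ S = Stmt11.phi p₀.1 p₀.2 S := rfl
    rw [← hrfl] at h1
    linarith
  have e1 := hb l0 (by rw [abs_of_pos hl0])
  have e2 := hb (-l0) (by rw [abs_neg, abs_of_pos hl0])
  have heq : l0 * Ψ S = l0 * Φ S := le_antisymm e1 (by linarith)
  exact mul_left_cancel₀ (ne_of_gt hl0) heq
end

section
/- Let X be a real Banach space, let x be a nonzero element of X and y ∈ X such that ‖x + λy‖ ≥ ‖x‖ for every λ ≥ 0. Then either x ⊥_B y, or f(y) > 0 for every norm-one support functional f of x. -/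
/-- If `‖x + λy‖ ≥ ‖x‖` for every `λ ≥ 0`, then either `x ⊥_B y`
or `f(y) > 0` for every norm-one support functional `f` of `x`. -/
theorem stmt16 {X : Type*} [NormedAddCommGroup X] [NormedSpace ℝ X] [CompleteSpace X]
    (x : X) (hx : x ≠ 0) (y : X)
    (h : ∀ lam : ℝ, 0 ≤ lam → ‖x + lam • y‖ ≥ ‖x‖) :
    (∀ lam : ℝ, ‖x + lam • y‖ ≥ ‖x‖) ∨
      (∀ f : X →L[ℝ] ℝ, ‖f‖ = 1 → f x = ‖x‖ → f y > 0) := by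
  by_cases hall : ∀ lam : ℝ, ‖x + lam • y‖ ≥ ‖x‖
  · exact Or.inl hall
  · right
    push_neg at hall
    obtain ⟨l, hl⟩ := hall
    have hlneg : l < 0 := by
      by_contra hge
      push_neg at hge
      exact absurd (h l hge) (not_le.mpr hl)
    intro f hf hfx
    have hbound : f (x + l • y) ≤ ‖x + l • y‖ := by
      calc f (x + l • y) ≤ ‖f (x + l • y)‖ := le_abs_self _
        _ ≤ ‖f‖ * ‖x + l • y‖ := f.le_opNorm _
        _ = ‖x + l • y‖ := by rw [hf, one_mul]
    have : ‖x‖ + l * f y ≤ ‖x + l • y‖ := by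
      simpa [hfx, map_add, map_smul, smul_eq_mul] using hbound
    have hlf : l * f y < 0 := by linarith
    nlinarith
end

section
/- Let X be a complex Banach space and x = (x_1,…,x_n), y = (y_1,…,y_n) ∈ X_∞^n with x ≠ 0. Then x ⊥_B y if and only if 0 lies in the convex hull of the set {g(y_i) : 1 ≤ i ≤ n, ‖x_i‖ = ‖x‖, g a norm-one support functional of x_i} ⊆ ℂ. -/
open ENNReal

open Filter Topology Metric Set in
private lemma stmt17_lemA {X : Type*} [NormedAddCommGroup X] [NormedSpace ℂ X]
    (u v : X) (hu : u ≠ 0) (ε : ℝ)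
    (h : ∀ t : ℝ, t ∈ Set.Ioc (0:ℝ) 1 → ‖u‖ ≤ ‖u + t • v‖ + ε * t) :
    ∃ g : X →L[ℂ] ℂ, ‖g‖ = 1 ∧ g u = (‖u‖ : ℂ) ∧ -ε ≤ (g v).re := by
  have : Nontrivial X := nontrivial_of_ne u 0 hu
  choose f hf1 hf2 using fun t : ℝ => exists_dual_vector' ℂ (u + t • v)
  set F : ℝ → WeakDual ℂ X := fun t => StrongDual.toWeakDual (f t) with hF
  set l : Filter ℝ := 𝓝[>] (0:ℝ) with hl
  have hsmul : ∀ (t : ℝ) (w : X), t • w = ((t : ℂ)) • w := fun t w =>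
    (algebraMap_smul ℂ t w).symm
  have hsplit : ∀ t : ℝ, (f t) (u + t • v) = (f t) u + (t : ℂ) * (f t) v := by
    intro t
    rw [map_add, show (f t) (t • v) = (t : ℂ) * (f t) v from by
      rw [hsmul t v, map_smul, smul_eq_mul]]
  have hkey : ∀ t : ℝ, (f t) u = ((‖u + t • v‖ : ℝ) : ℂ) - (t : ℂ) * (f t) v := by
    intro t
    have h2 := hf2 t
    rw [hsplit t] at h2
    exact eq_sub_of_add_eq h2
  have hK := WeakDual.isCompact_closedBall (𝕜 := ℂ) (E := X) 0 1
  have hmem : ∀ t : ℝ, F t ∈ WeakDual.toStrongDual ⁻¹' Metric.closedBall 0 1 := by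
    intro t
    simp only [Set.mem_preimage, Metric.mem_closedBall, dist_zero_right]
    exact le_of_eq (hf1 t)
  have hle : Filter.map F l ≤ 𝓟 (WeakDual.toStrongDual ⁻¹' Metric.closedBall 0 1) := by
    rw [Filter.le_principal_iff, Filter.mem_map]
    exact Filter.Eventually.of_forall hmem
  obtain ⟨g, hgK, hg⟩ := hK.exists_clusterPt hle
  have hg' : MapClusterPt g l F := hg
  have htu : Tendsto (fun t : ℝ => (f t) u) l (𝓝 ((‖u‖ : ℝ) : ℂ)) := by
    have h1 : Tendsto (fun t : ℝ => ((‖u + t • v‖ : ℝ) : ℂ)) l (𝓝 ((‖u‖ : ℝ) : ℂ)) := by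
      have hc : Continuous fun t : ℝ => ((‖u + t • v‖ : ℝ) : ℂ) := by
        exact Complex.continuous_ofReal.comp
          ((continuous_const.add (continuous_id.smul continuous_const)).norm)
      have := hc.tendsto 0
      simpa using this.mono_left nhdsWithin_le_nhds
    have h2 : Tendsto (fun t : ℝ => (t : ℂ) * (f t) v) l (𝓝 0) := by
      apply squeeze_zero_norm (a := fun t : ℝ => |t| * ‖v‖)
      · intro t
        rw [norm_mul, Complex.norm_real, Real.norm_eq_abs]
        have : ‖(f t) v‖ ≤ ‖v‖ := by
          calc ‖(f t) v‖ ≤ ‖f t‖ * ‖v‖ := (f t).le_opNorm v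
            _ = ‖v‖ := by rw [hf1 t, one_mul]
        exact mul_le_mul_of_nonneg_left this (abs_nonneg t)
      · have hc : Continuous fun t : ℝ => |t| * ‖v‖ :=
          (continuous_abs.mul continuous_const)
        have := hc.tendsto 0
        simpa using this.mono_left nhdsWithin_le_nhds
    have := h1.sub h2
    simp only [sub_zero] at this
    exact this.congr fun t => (hkey t).symm
  have hcu : MapClusterPt (g u) l (fun t : ℝ => (F t) u) :=
    hg'.continuousAt_comp (WeakDual.eval_continuous (𝕜 := ℂ) u).continuousAt
  have hval : g u = ((‖u‖ : ℝ) : ℂ) := by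
    have hmap : Filter.map (fun t : ℝ => (F t) u) l ≤ 𝓝 ((‖u‖ : ℝ) : ℂ) := htu
    exact eq_of_nhds_neBot (hcu.clusterPt.mono hmap)
  have hrt : ∀ᶠ t in l, -ε ≤ ((f t) v).re := by
    filter_upwards [Ioc_mem_nhdsGT (zero_lt_one (α := ℝ))] with t ht
    have h0 := h t ht
    have e1 : ‖u + t • v‖ = ((f t) u).re + t * ((f t) v).re := by
      have := congrArg Complex.re (hf2 t)
      rw [hsplit t] at this
      simpa [Complex.add_re, Complex.re_ofReal_mul] using this.symm
    have e2 : ((f t) u).re ≤ ‖u‖ := by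
      calc ((f t) u).re ≤ ‖(f t) u‖ := Complex.re_le_norm _
        _ = ‖(f t) u‖ := rfl
        _ ≤ ‖f t‖ * ‖u‖ := (f t).le_opNorm u
        _ = ‖u‖ := by rw [hf1 t, one_mul]
    nlinarith [ht.1]
  have hcv : MapClusterPt ((g v).re) l (fun t : ℝ => ((F t) v).re) := by
    have h1 : MapClusterPt (g v) l (fun t : ℝ => (F t) v) :=
      hg'.continuousAt_comp (WeakDual.eval_continuous (𝕜 := ℂ) v).continuousAt
    exact h1.continuousAt_comp Complex.continuous_re.continuousAt
  have hre : -ε ≤ (g v).re := by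
    have hmap : Filter.map (fun t : ℝ => ((F t) v).re) l ≤ 𝓟 (Set.Ici (-ε)) := by
      rw [Filter.le_principal_iff, Filter.mem_map]
      exact hrt
    have : (g v).re ∈ closure (Set.Ici (-ε)) :=
      mem_closure_iff_clusterPt.mpr (hcv.clusterPt.mono hmap)
    rwa [isClosed_Ici.closure_eq] at this
  refine ⟨WeakDual.toStrongDual g, ?_, hval, hre⟩
  have hle1 : ‖WeakDual.toStrongDual g‖ ≤ 1 := by
    simpa [Metric.mem_closedBall, dist_zero_right] using hgK
  have hge1 : 1 ≤ ‖WeakDual.toStrongDual g‖ := by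
    have hupos : (0:ℝ) < ‖u‖ := norm_pos_iff.mpr hu
    have : ‖u‖ ≤ ‖WeakDual.toStrongDual g‖ * ‖u‖ := by
      calc ‖u‖ = ‖g u‖ := by rw [hval]; simp
        _ ≤ ‖WeakDual.toStrongDual g‖ * ‖u‖ := (WeakDual.toStrongDual g).le_opNorm u
    nlinarith [this, hupos]
  linarith

private lemma stmt17_lemB {X : Type*} [NormedAddCommGroup X] [NormedSpace ℝ X]
    (u v : X) {ε t r : ℝ} (ht : 0 < t) (htr : t ≤ r)
    (h : ‖u + r • v‖ ≤ ‖u‖ - ε * r) : ‖u + t • v‖ ≤ ‖u‖ - ε * t := by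
  have hr : 0 < r := lt_of_lt_of_le ht htr
  have hdiv0 : 0 ≤ t / r := div_nonneg ht.le hr.le
  have hdiv1 : t / r ≤ 1 := (div_le_one hr).mpr htr
  have key : u + t • v = (1 - t / r) • u + (t / r) • (u + r • v) := by
    rw [smul_add, smul_smul, div_mul_cancel₀ _ (ne_of_gt hr), ← add_assoc,
      ← add_smul, sub_add_cancel, one_smul]
  calc ‖u + t • v‖ = ‖(1 - t / r) • u + (t / r) • (u + r • v)‖ := by rw [key]
    _ ≤ (1 - t / r) * ‖u‖ + (t / r) * (‖u‖ - ε * r) := by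
        refine (norm_add_le _ _).trans ?_
        rw [norm_smul, norm_smul, Real.norm_of_nonneg (by linarith),
          Real.norm_of_nonneg hdiv0]
        gcongr
    _ = ‖u‖ - ε * t := by field_simp; ring

open Set in
private lemma stmt17_join_compact {E : Type*} [NormedAddCommGroup E] [NormedSpace ℝ E]
    {s t : Set E} (hs : IsCompact s) (ht : IsCompact t) :
    IsCompact (convexJoin ℝ s t) := by
  have heq : convexJoin ℝ s t =
      (fun p : ℝ × E × E => (1 - p.1) • p.2.1 + p.1 • p.2.2) ''
        (Set.Icc (0:ℝ) 1 ×ˢ s ×ˢ t) := by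
    ext z
    simp only [mem_convexJoin, segment_eq_image, Set.mem_image, Set.mem_prod, Prod.exists]
    constructor
    · rintro ⟨a, ha, b, hb, θ, hθ, rfl⟩
      exact ⟨θ, a, b, ⟨hθ, ha, hb⟩, rfl⟩
    · rintro ⟨θ, a, b, ⟨hθ, ha, hb⟩, rfl⟩
      exact ⟨a, ha, b, hb, θ, hθ, rfl⟩
  rw [heq]
  refine (isCompact_Icc.prod (hs.prod ht)).image ?_
  fun_prop

private lemma stmt17_hull_compact {ι : Type*} [DecidableEq ι] (s : Finset ι) (C : ι → Set ℂ)
    (hconv : ∀ i, Convex ℝ (C i)) (hcomp : ∀ i, IsCompact (C i)) :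
    IsCompact (convexHull ℝ (⋃ i ∈ s, C i)) := by
  induction s using Finset.induction with
  | empty => simp
  | @insert a s ha ih =>
    rw [Finset.set_biUnion_insert]
    rcases (C a).eq_empty_or_nonempty with h0 | hne
    · rw [h0, Set.empty_union]; exact ih
    rcases (⋃ i ∈ s, C i).eq_empty_or_nonempty with h1 | hne1
    · rw [h1, Set.union_empty, (hconv a).convexHull_eq]; exact hcomp a
    · rw [convexHull_union hne hne1, (hconv a).convexHull_eq]
      exact stmt17_join_compact (hcomp a) ih

private lemma stmt17_Si_compact {X : Type*} [NormedAddCommGroup X] [NormedSpace ℂ X] (a b : X) :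
    IsCompact {c : ℂ | ∃ g : X →L[ℂ] ℂ, ‖g‖ ≤ 1 ∧ g a = (‖a‖ : ℂ) ∧ c = g b} := by
  have heq : {c : ℂ | ∃ g : X →L[ℂ] ℂ, ‖g‖ ≤ 1 ∧ g a = (‖a‖ : ℂ) ∧ c = g b} =
      (fun g : WeakDual ℂ X => g b) ''
        ((WeakDual.toStrongDual ⁻¹' Metric.closedBall 0 1) ∩
          {g : WeakDual ℂ X | g a = (‖a‖ : ℂ)}) := by
    ext c
    constructor
    · rintro ⟨g, h1, h2, rfl⟩
      exact ⟨StrongDual.toWeakDual g,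
        ⟨by simpa [Metric.mem_closedBall, dist_zero_right] using h1, h2⟩, rfl⟩
    · rintro ⟨g, ⟨h1, h2⟩, rfl⟩
      exact ⟨WeakDual.toStrongDual g,
        by simpa [Metric.mem_closedBall, dist_zero_right] using h1, h2, rfl⟩
  rw [heq]
  refine IsCompact.image ?_ (WeakDual.eval_continuous (𝕜 := ℂ) b)
  refine (WeakDual.isCompact_closedBall (𝕜 := ℂ) (E := X) 0 1).inter_right ?_
  exact isClosed_singleton.preimage (WeakDual.eval_continuous (𝕜 := ℂ) a)

private lemma stmt17_Si_convex {X : Type*} [NormedAddCommGroup X] [NormedSpace ℂ X] (a b : X) :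
    Convex ℝ {c : ℂ | ∃ g : X →L[ℂ] ℂ, ‖g‖ ≤ 1 ∧ g a = (‖a‖ : ℂ) ∧ c = g b} := by
  rintro c1 ⟨g1, hg1, hga1, rfl⟩ c2 ⟨g2, hg2, hga2, rfl⟩ p q hp hq hpq
  refine ⟨(p : ℂ) • g1 + (q : ℂ) • g2, ?_, ?_, ?_⟩
  · calc ‖(p : ℂ) • g1 + (q : ℂ) • g2‖ ≤ ‖(p : ℂ) • g1‖ + ‖(q : ℂ) • g2‖ := norm_add_le _ _
      _ ≤ ‖(p : ℂ)‖ * ‖g1‖ + ‖(q : ℂ)‖ * ‖g2‖ :=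
          add_le_add (ContinuousLinearMap.opNorm_smul_le _ _)
            (ContinuousLinearMap.opNorm_smul_le _ _)
      _ = p * ‖g1‖ + q * ‖g2‖ := by
          rw [Complex.norm_real, Complex.norm_real,
            Real.norm_of_nonneg hp, Real.norm_of_nonneg hq]
      _ ≤ p * 1 + q * 1 := by gcongr
      _ = 1 := by linarith
  · rw [ContinuousLinearMap.add_apply, ContinuousLinearMap.smul_apply,
      ContinuousLinearMap.smul_apply, hga1, hga2, smul_eq_mul, smul_eq_mul,
      ← add_mul, ← Complex.ofReal_add, hpq, Complex.ofReal_one, one_mul]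
  · rw [ContinuousLinearMap.add_apply, ContinuousLinearMap.smul_apply,
      ContinuousLinearMap.smul_apply, smul_eq_mul, smul_eq_mul,
      Complex.real_smul, Complex.real_smul]

/-- In the complex case, `x ⊥_B y` in `X_∞^n` iff `0` lies in the
convex hull of the values `g(y_i)` of norm-one support functionals `g` of the
norm-attaining coordinates `x_i`. -/
theorem stmt17 {X : Type*} [NormedAddCommGroup X] [NormedSpace ℂ X] [CompleteSpace X]
    {n : ℕ} (x y : PiLp ⊤ (fun _ : Fin n => X)) (hx : x ≠ 0) :
    (∀ lam : ℂ, ‖x + lam • y‖ ≥ ‖x‖) ↔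
      (0 : ℂ) ∈ convexHull ℝ
        {c : ℂ | ∃ (i : Fin n) (g : X →L[ℂ] ℂ), ‖x i‖ = ‖x‖ ∧
          ‖g‖ = 1 ∧ g (x i) = (‖x i‖ : ℂ) ∧ c = g (y i)} := by
  classical
  set S : Set ℂ := {c : ℂ | ∃ (i : Fin n) (g : X →L[ℂ] ℂ), ‖x i‖ = ‖x‖ ∧
      ‖g‖ = 1 ∧ g (x i) = (‖x i‖ : ℂ) ∧ c = g (y i)} with hS
  have hxpos : (0:ℝ) < ‖x‖ := norm_pos_iff.mpr hx
  have hcoord : ∀ (w : PiLp ⊤ (fun _ : Fin n => X)) (i : Fin n), ‖w i‖ ≤ ‖w‖ := by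
    intro w i
    rw [PiLp.norm_eq_ciSup]
    exact le_ciSup (f := fun j => ‖w j‖) (Finite.bddAbove_range _) i
  have hn : n ≠ 0 := by
    rintro rfl
    exact hx (PiLp.ext fun i => i.elim0)
  have hne : Nonempty (Fin n) := ⟨⟨0, Nat.pos_of_ne_zero hn⟩⟩
  constructor
  · -- forward direction
    intro horth
    by_contra h0
    set Si : Fin n → Set ℂ := fun i =>
      {c : ℂ | ∃ g : X →L[ℂ] ℂ, ‖g‖ ≤ 1 ∧ g (x i) = (‖x i‖ : ℂ) ∧ c = g (y i)} with hSi
    set A : Finset (Fin n) := Finset.univ.filter (fun i => ‖x i‖ = ‖x‖) with hA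
    have hSeq : S = ⋃ i ∈ A, Si i := by
      ext c
      simp only [hS, Set.mem_setOf_eq, Set.mem_iUnion, hSi, hA, Finset.mem_filter,
        Finset.mem_univ, true_and, exists_prop]
      constructor
      · rintro ⟨i, g, hi, hg, hgx, rfl⟩
        exact ⟨i, hi, g, le_of_eq hg, hgx, rfl⟩
      · rintro ⟨i, hi, g, hgle, hgx, rfl⟩
        refine ⟨i, g, hi, ?_, hgx, rfl⟩
        have h1 : ‖x i‖ ≤ ‖g‖ * ‖x i‖ := by
          calc ‖x i‖ = ‖g (x i)‖ := by rw [hgx]; simp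
            _ ≤ ‖g‖ * ‖x i‖ := g.le_opNorm _
        have hpos : 0 < ‖x i‖ := hi ▸ hxpos
        have hge : 1 ≤ ‖g‖ := by nlinarith
        linarith
    have hcomp : IsCompact (convexHull ℝ S) := by
      rw [hSeq]
      exact stmt17_hull_compact A Si (fun i => stmt17_Si_convex _ _)
        (fun i => stmt17_Si_compact _ _)
    obtain ⟨f, u0, v0, hfu, huv, hv0⟩ :=
      geometric_hahn_banach_compact_closed (convex_convexHull ℝ S) hcomp
        (convex_singleton 0) isClosed_singleton
        (Set.disjoint_singleton_right.mpr h0)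
    have hv0' : v0 < 0 := by simpa using hv0 0 rfl
    set δ : ℝ := -v0 with hδ
    have hδpos : 0 < δ := by simp only [hδ]; linarith
    have hfS : ∀ c ∈ S, f c ≤ -δ := by
      intro c hc
      have := hfu c (subset_convexHull ℝ S hc)
      simp only [hδ]
      linarith
    set μ : ℂ := ((f 1 : ℝ) : ℂ) - ((f Complex.I : ℝ) : ℂ) * Complex.I with hμ
    have hfre : ∀ c : ℂ, f c = (μ * c).re := by
      intro c
      have hdec : c.re • (1:ℂ) + c.im • Complex.I = c := by
        rw [Complex.real_smul, Complex.real_smul, mul_one, Complex.re_add_im]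
      conv_lhs => rw [← hdec]
      rw [map_add, map_smul, map_smul, smul_eq_mul, smul_eq_mul]
      simp only [hμ, Complex.mul_re, Complex.sub_re, Complex.sub_im, Complex.ofReal_re,
        Complex.ofReal_im, Complex.mul_im, Complex.I_re, Complex.I_im]
      ring
    have hstep : ∀ i : Fin n, ‖x i‖ = ‖x‖ →
        ∃ r ∈ Set.Ioc (0:ℝ) 1, ‖x i + r • (μ • y i)‖ ≤ ‖x i‖ - (δ/2) * r := by
      intro i hi
      by_contra hcon
      push_neg at hcon
      have hx0 : x i ≠ 0 := by
        rw [← norm_pos_iff, hi]; exact hxpos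
      obtain ⟨g, hg1, hgx, hgre⟩ := stmt17_lemA (x i) (μ • y i) hx0 (δ/2) (fun t ht => by
        have := hcon t ht
        linarith)
      have hmemS : g (y i) ∈ S := ⟨i, g, hi, hg1, hgx, rfl⟩
      have h1 : (μ * g (y i)).re ≤ -δ := by rw [← hfre]; exact hfS _ hmemS
      have h2 : g (μ • y i) = μ * g (y i) := by rw [map_smul, smul_eq_mul]
      rw [h2] at hgre
      linarith
    have hall : ∀ i : Fin n, ∃ r : ℝ, 0 < r ∧
        ∀ s : ℝ, 0 < s → s ≤ r → ‖x i + s • (μ • y i)‖ < ‖x‖ := by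
      intro i
      by_cases hi : ‖x i‖ = ‖x‖
      · obtain ⟨r, hrIoc, hrle⟩ := hstep i hi
        refine ⟨r, hrIoc.1, fun s hs hsr => ?_⟩
        have hb := stmt17_lemB (x i) (μ • y i) hs hsr hrle
        have hpos2 : 0 < (δ/2) * s := by positivity
        calc ‖x i + s • (μ • y i)‖ ≤ ‖x i‖ - δ/2 * s := hb
          _ < ‖x i‖ := by linarith
          _ = ‖x‖ := hi
      · have hlt : ‖x i‖ < ‖x‖ := lt_of_le_of_ne (hcoord x i) hi
        refine ⟨(‖x‖ - ‖x i‖) / (‖μ • y i‖ + 1), div_pos (by linarith) (by positivity), fun s hs hsr => ?_⟩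
        have h1 : ‖x i + s • (μ • y i)‖ ≤ ‖x i‖ + s * ‖μ • y i‖ := by
          calc ‖x i + s • (μ • y i)‖ ≤ ‖x i‖ + ‖s • (μ • y i)‖ := norm_add_le _ _
            _ = ‖x i‖ + s * ‖μ • y i‖ := by
                rw [norm_smul, Real.norm_of_nonneg hs.le]
        have hd : (0:ℝ) < ‖μ • y i‖ + 1 := by positivity
        have h2 : s * ‖μ • y i‖ < ‖x‖ - ‖x i‖ := by
          calc s * ‖μ • y i‖ ≤ ((‖x‖ - ‖x i‖) / (‖μ • y i‖ + 1)) * ‖μ • y i‖ := by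
                gcongr
            _ < ((‖x‖ - ‖x i‖) / (‖μ • y i‖ + 1)) * (‖μ • y i‖ + 1) := by
                have hrpos : (0:ℝ) < (‖x‖ - ‖x i‖) / (‖μ • y i‖ + 1) :=
                  div_pos (by linarith) (by positivity)
                gcongr
                linarith
            _ = ‖x‖ - ‖x i‖ := div_mul_cancel₀ _ (ne_of_gt hd)
        linarith
    choose r hr hrs using hall
    have hune : (Finset.univ : Finset (Fin n)).Nonempty := Finset.univ_nonempty
    set t : ℝ := Finset.univ.inf' hune r with htdef
    have htpos : 0 < t := (Finset.lt_inf'_iff hune).mpr fun i _ => hr i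
    set lam : ℂ := (t : ℂ) * μ with hlam
    have hbig : ∀ i, ‖(x + lam • y) i‖ < ‖x‖ := by
      intro i
      have happ : (x + lam • y) i = x i + t • (μ • y i) := by
        rw [PiLp.add_apply, PiLp.smul_apply]
        congr 1
        rw [hlam, mul_smul]
        exact algebraMap_smul ℂ t (μ • y i)
      rw [happ]
      exact hrs i t htpos (Finset.inf'_le r (Finset.mem_univ i))
    have hfin : ‖x + lam • y‖ < ‖x‖ := by
      have hle : ‖x + lam • y‖ ≤ Finset.univ.sup' hune (fun i => ‖(x + lam • y) i‖) := by
        rw [PiLp.norm_eq_ciSup]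
        exact ciSup_le fun i => Finset.le_sup' (fun j => ‖(x + lam • y) j‖) (Finset.mem_univ i)
      have hlt : Finset.univ.sup' hune (fun i => ‖(x + lam • y) i‖) < ‖x‖ :=
        (Finset.sup'_lt_iff hune).mpr fun i _ => hbig i
      linarith
    exact absurd (horth lam) (not_le.mpr hfin)
  · -- backward direction
    intro hmem lam
    rw [mem_convexHull_iff_exists_fintype] at hmem
    obtain ⟨ι, hfin, w, z, hw0, hw1, hz, hsum⟩ := hmem
    have hexj : ∃ j, 0 < w j ∧ 0 ≤ (lam * z j).re := by
      by_contra hno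
      push_neg at hno
      have hsum0 : ∑ j, w j * (lam * z j).re = 0 := by
        have e : ∀ j : ι, w j * (lam * z j).re = (lam * (w j • z j)).re := by
          intro j
          rw [Complex.real_smul, show lam * ((w j : ℂ) * z j) = (w j : ℂ) * (lam * z j)
            from by ring, Complex.re_ofReal_mul]
        calc ∑ j, w j * (lam * z j).re = ∑ j, (lam * (w j • z j)).re :=
              Finset.sum_congr rfl (fun j _ => e j)
          _ = (∑ j, lam * (w j • z j)).re := (Complex.re_sum _ _).symm
          _ = (lam * ∑ j, w j • z j).re := by rw [← Finset.mul_sum]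
          _ = 0 := by rw [hsum, mul_zero, Complex.zero_re]
      obtain ⟨j0, hj0⟩ : ∃ j, 0 < w j := by
        by_contra hall0
        push_neg at hall0
        have hz0 : ∑ j, w j = 0 :=
          Finset.sum_eq_zero fun j _ => le_antisymm (hall0 j) (hw0 j)
        rw [hw1] at hz0
        norm_num at hz0
      have hlt : ∑ j, w j * (lam * z j).re < ∑ _j : ι, (0:ℝ) := by
        apply Finset.sum_lt_sum
        · intro j _
          rcases (hw0 j).lt_or_eq with hcase | hcase
          · exact le_of_lt (mul_neg_of_pos_of_neg hcase (hno j hcase))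
          · rw [← hcase, zero_mul]
        · exact ⟨j0, Finset.mem_univ _, mul_neg_of_pos_of_neg hj0 (hno j0 hj0)⟩
      rw [Finset.sum_const_zero, hsum0] at hlt
      exact lt_irrefl _ hlt
    obtain ⟨j, hwj, hrej⟩ := hexj
    obtain ⟨i, g, hi, hg1, hgx, hzj⟩ := hz j
    have h1 : ‖x‖ + (lam * g (y i)).re ≤ ‖x i + lam • y i‖ := by
      have e : (g (x i + lam • y i)).re = ‖x‖ + (lam * g (y i)).re := by
        rw [map_add, map_smul, smul_eq_mul, Complex.add_re, hgx, Complex.ofReal_re, hi]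
      calc ‖x‖ + (lam * g (y i)).re = (g (x i + lam • y i)).re := e.symm
        _ ≤ ‖g (x i + lam • y i)‖ := Complex.re_le_norm _
        _ = ‖g (x i + lam • y i)‖ := rfl
        _ ≤ ‖g‖ * ‖x i + lam • y i‖ := g.le_opNorm _
        _ = ‖x i + lam • y i‖ := by rw [hg1, one_mul]
    have h2 : ‖x i + lam • y i‖ ≤ ‖x + lam • y‖ := by
      have happ : (x + lam • y) i = x i + lam • y i := by
        rw [PiLp.add_apply, PiLp.smul_apply]
      rw [← happ]
      exact hcoord _ i
    have h3 : (lam * g (y i)).re = (lam * z j).re := by rw [← hzj]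
    rw [ge_iff_le]
    linarith
end

section
/- Let X and Y be finite-dimensional complex Banach spaces and T, S ∈ B(X,Y) with T ≠ 0. Then T ⊥_B S if and only if 0 lies in the convex hull of the set {f(Sx) : x ∈ M_T, f a norm-one support functional of Tx} ⊆ ℂ. -/
open Set Metric Filter Topology

lemma attain {X Y : Type*} [NormedAddCommGroup X] [NormedSpace ℂ X] [FiniteDimensional ℂ X]
    [NormedAddCommGroup Y] [NormedSpace ℂ Y] [Nontrivial X] (A : X →L[ℂ] Y) :
    ∃ x : X, ‖x‖ = 1 ∧ ‖A x‖ = ‖A‖ := by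
  have hsc : IsCompact (sphere (0:X) 1) := isCompact_sphere 0 1
  have hsne : (sphere (0:X) 1).Nonempty := NormedSpace.sphere_nonempty.mpr zero_le_one
  obtain ⟨x, hxs, hmax⟩ := hsc.exists_isMaxOn hsne ((A.continuous.norm).continuousOn)
  have hx1 : ‖x‖ = 1 := mem_sphere_zero_iff_norm.mp hxs
  refine ⟨x, hx1, le_antisymm (by simpa [hx1] using A.le_opNorm x) ?_⟩
  refine A.opNorm_le_bound (norm_nonneg _) fun y => ?_
  rcases eq_or_ne y 0 with rfl | hy
  · simp
  · have hny : (0:ℝ) < ‖y‖ := norm_pos_iff.mpr hy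
    set u : X := ((‖y‖⁻¹ : ℝ) : ℂ) • y with hu
    have hus : u ∈ sphere (0:X) 1 := by
      simp [hu, mem_sphere_zero_iff_norm, norm_smul, abs_of_nonneg (inv_nonneg.mpr hny.le),
        inv_mul_cancel₀ hny.ne']
    have hle : ‖A u‖ ≤ ‖A x‖ := hmax hus
    have hAu : ‖A u‖ = ‖y‖⁻¹ * ‖A y‖ := by
      simp [hu, map_smul, norm_smul, abs_of_nonneg (inv_nonneg.mpr hny.le)]
    rw [hAu] at hle
    calc ‖A y‖ = ‖y‖ * (‖y‖⁻¹ * ‖A y‖) := by field_simp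
    _ ≤ ‖y‖ * ‖A x‖ := by
        exact mul_le_mul_of_nonneg_left hle hny.le
    _ = ‖A x‖ * ‖y‖ := mul_comm _ _

lemma closed_hull {K : Set ℂ} (hK : IsCompact K) : IsClosed (convexHull ℝ K) := by
  rcases K.eq_empty_or_nonempty with rfl | ⟨k₀, hk₀⟩
  · simp
  set D : Set ((Fin 3 → ℝ) × (Fin 3 → ℂ)) :=
    (stdSimplex ℝ (Fin 3)) ×ˢ (Set.univ.pi fun _ : Fin 3 => K) with hD
  have hDc : IsCompact D := (isCompact_stdSimplex _ _).prod (isCompact_univ_pi fun _ => hK)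
  set g : ((Fin 3 → ℝ) × (Fin 3 → ℂ)) → ℂ := fun p => ∑ i, p.1 i • p.2 i with hg
  have hgc : Continuous g := by
    apply continuous_finset_sum
    intro i _
    exact ((continuous_apply i).comp continuous_fst).smul
      ((continuous_apply i).comp continuous_snd)
  have himg : g '' D = convexHull ℝ K := by
    apply Subset.antisymm
    · rintro _ ⟨⟨w, c⟩, ⟨hw, hc⟩, rfl⟩
      exact (convex_convexHull ℝ K).sum_mem (fun i _ => hw.1 i) hw.2
        (fun i _ => subset_convexHull ℝ K (hc i (mem_univ i)))
    · intro x hx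
      obtain ⟨ι, hfin, z, w, hzK, hai, hw0, hw1, hsum⟩ :=
        eq_pos_convex_span_of_mem_convexHull hx
      have hcard : Fintype.card ι ≤ 3 := by
        have h1 := hai.card_le_finrank_succ
        have h2 : Module.finrank ℝ (vectorSpan ℝ (Set.range z)) ≤ Module.finrank ℝ ℂ :=
          Submodule.finrank_le _
        rw [Complex.finrank_real_complex] at h2
        omega
      obtain ⟨e⟩ : Nonempty (ι ↪ Fin 3) := by
        apply Function.Embedding.nonempty_of_card_le
        simpa using hcard
      set w' : Fin 3 → ℝ := fun j => ∑ i : ι, if e i = j then w i else 0 with hw'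
      set c' : Fin 3 → ℂ := Function.extend e z (fun _ => k₀) with hc'
      refine ⟨(w', c'), ⟨⟨fun j => Finset.sum_nonneg fun i _ => ?_, ?_⟩, fun j _ => ?_⟩, ?_⟩
      · split
        exacts [(hw0 i).le, le_rfl]
      · rw [hw', Finset.sum_comm]
        simp [hw1]
      · show Function.extend (⇑e) z (fun _ => k₀) j ∈ K
        rcases em (∃ i, e i = j) with ⟨i, rfl⟩ | hne
        · rw [e.injective.extend_apply]
          exact hzK (Set.mem_range_self i)
        · rw [Function.extend_apply' _ _ _ hne]
          exact hk₀
      · show ∑ j, w' j • c' j = x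
        rw [← hsum]
        have : ∀ j, w' j • c' j = ∑ i : ι, if e i = j then w i • c' j else 0 := by
          intro j
          rw [hw', Finset.sum_smul]
          congr 1; ext i
          split <;> simp
        simp_rw [this]
        rw [Finset.sum_comm]
        congr 1; ext i
        rw [Finset.sum_ite_eq, if_pos (Finset.mem_univ _), hc', e.injective.extend_apply]
  have : IsCompact (convexHull ℝ K) := himg ▸ hDc.image hgc
  exact this.isClosed

lemma claim_aux {X Y : Type*} [NormedAddCommGroup X] [NormedSpace ℂ X] [FiniteDimensional ℂ X]
    [NormedAddCommGroup Y] [NormedSpace ℂ Y] [FiniteDimensional ℂ Y]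
    (T S : X →L[ℂ] Y) (hT : T ≠ 0)
    (h : ∀ lam : ℂ, ‖T + lam • S‖ ≥ ‖T‖) (d : ℂ) :
    ∃ (x : X) (f : Y →L[ℂ] ℂ), ‖x‖ = 1 ∧ ‖T x‖ = ‖T‖ ∧ ‖f‖ = 1 ∧
      f (T x) = (‖T x‖ : ℂ) ∧ 0 ≤ (d * f (S x)).re := by
  have hTpos : (0:ℝ) < ‖T‖ := norm_pos_iff.mpr hT
  have hXnt : Nontrivial X := by
    obtain ⟨x, hx⟩ : ∃ x, T x ≠ 0 := by
      by_contra hc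
      push_neg at hc
      exact hT (ContinuousLinearMap.ext fun x => by simp [hc x])
    exact nontrivial_of_ne x 0 (fun hx0 => hx (by simp [hx0]))
  set t : ℕ → ℝ := fun n => 1 / (n + 1) with ht
  have htpos : ∀ n, 0 < t n := fun n => by positivity
  set lam : ℕ → ℂ := fun n => (t n : ℂ) * d with hlam
  set A : ℕ → X →L[ℂ] Y := fun n => T + lam n • S with hA
  have hAn : ∀ n, ‖T‖ ≤ ‖A n‖ := fun n => h (lam n)
  choose xs hxs1 hxs2 using fun n => attain (A n)
  have hne : ∀ n, A n (xs n) ≠ 0 := by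
    intro n hn
    have := hxs2 n
    rw [hn, norm_zero] at this
    exact absurd (this ▸ hAn n) (by linarith)
  choose fs hfs1 hfs2 using fun n => exists_dual_vector ℂ (A n (xs n)) (norm_ne_zero_iff.mpr (hne n))
  -- compactness of sphere × closed ball
  set s : Set (X × (Y →L[ℂ] ℂ)) := sphere (0:X) 1 ×ˢ closedBall (0 : Y →L[ℂ] ℂ) 1 with hs
  have hsc : IsCompact s := (isCompact_sphere 0 1).prod (isCompact_closedBall 0 1)
  have hmem : ∀ n, (xs n, fs n) ∈ s := by
    intro n
    exact ⟨mem_sphere_zero_iff_norm.mpr (hxs1 n), mem_closedBall_zero_iff.mpr (hfs1 n).le⟩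
  obtain ⟨⟨x, f⟩, hxfs, φ, hφ, hconv⟩ := hsc.tendsto_subseq hmem
  have hx1 : ‖x‖ = 1 := mem_sphere_zero_iff_norm.mp hxfs.1
  have hfle : ‖f‖ ≤ 1 := mem_closedBall_zero_iff.mp hxfs.2
  have htx : Tendsto (fun n => xs (φ n)) atTop (𝓝 x) :=
    (continuous_fst.tendsto (x, f)).comp hconv
  have htf : Tendsto (fun n => fs (φ n)) atTop (𝓝 f) :=
    (continuous_snd.tendsto (x, f)).comp hconv
  have htlam : Tendsto (fun n => lam (φ n)) atTop (𝓝 0) := by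
    have h1 : Tendsto (fun n : ℕ => t n) atTop (𝓝 0) :=
      tendsto_one_div_add_atTop_nhds_zero_nat
    have h2 : Tendsto (fun n => t (φ n)) atTop (𝓝 0) := h1.comp hφ.tendsto_atTop
    have h3 : Tendsto (fun n => ((t (φ n) : ℂ))) atTop (𝓝 0) := by
      simpa [Function.comp_def] using (Complex.continuous_ofReal.tendsto 0).comp h2
    simpa using h3.mul_const d
  have hAx : Tendsto (fun n => A (φ n) (xs (φ n))) atTop (𝓝 (T x)) := by
    have h1 : Tendsto (fun n => T (xs (φ n))) atTop (𝓝 (T x)) :=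
      (T.continuous.tendsto x).comp htx
    have h2 : Tendsto (fun n => S (xs (φ n))) atTop (𝓝 (S x)) :=
      (S.continuous.tendsto x).comp htx
    have h3 : Tendsto (fun n => lam (φ n) • S (xs (φ n))) atTop (𝓝 ((0:ℂ) • S x)) :=
      htlam.smul h2
    rw [zero_smul] at h3
    have h4 := h1.add h3
    rw [add_zero] at h4
    simpa only [hA, ContinuousLinearMap.add_apply, ContinuousLinearMap.smul_apply] using h4
  have hnormA : Tendsto (fun n => ‖A (φ n) (xs (φ n))‖) atTop (𝓝 ‖T x‖) := hAx.norm
  have hTx : ‖T x‖ = ‖T‖ := by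
    refine le_antisymm (by simpa [hx1] using T.le_opNorm x) ?_
    refine ge_of_tendsto hnormA (Eventually.of_forall fun n => ?_)
    rw [hxs2 (φ n)]
    exact hAn (φ n)
  have happly : Continuous fun p : (Y →L[ℂ] ℂ) × Y => p.1 p.2 :=
    isBoundedBilinearMap_apply.continuous
  have hfev : Tendsto (fun n => fs (φ n) (A (φ n) (xs (φ n)))) atTop (𝓝 (f (T x))) :=
    (happly.tendsto (f, T x)).comp (htf.prodMk_nhds hAx)
  have hfTx : f (T x) = (‖T x‖ : ℂ) := by
    have h1 : Tendsto (fun n => fs (φ n) (A (φ n) (xs (φ n)))) atTop (𝓝 ((‖T x‖ : ℂ))) := by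
      have : (fun n => fs (φ n) (A (φ n) (xs (φ n)))) =
          fun n => ((‖A (φ n) (xs (φ n))‖ : ℂ)) := by
        funext n; exact hfs2 (φ n)
      rw [this]
      exact (Complex.continuous_ofReal.tendsto _).comp hnormA
    exact tendsto_nhds_unique hfev h1
  have hf1 : ‖f‖ = 1 := by
    refine le_antisymm hfle ?_
    have h1 : ‖T x‖ ≤ ‖f‖ * ‖T x‖ := by
      calc ‖T x‖ = ‖f (T x)‖ := by rw [hfTx]; simp
      _ ≤ ‖f‖ * ‖T x‖ := f.le_opNorm _
    have h2 : (0:ℝ) < ‖T x‖ := hTx ▸ hTpos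
    nlinarith
  have key : ∀ n, 0 ≤ (d * fs n (S (xs n))).re := by
    intro n
    have hsplit : fs n (A n (xs n)) = fs n (T (xs n)) + lam n * fs n (S (xs n)) := by
      rw [show A n (xs n) = T (xs n) + lam n • S (xs n) by
        simp [hA, ContinuousLinearMap.add_apply, ContinuousLinearMap.smul_apply]]
      rw [map_add, map_smul, smul_eq_mul]
    have hval : fs n (T (xs n)) + lam n * fs n (S (xs n)) = ((‖A n‖ : ℂ)) := by
      rw [← hsplit, hfs2 n, hxs2 n]
      norm_num
    have hre : (fs n (T (xs n))).re + (lam n * fs n (S (xs n))).re = ‖A n‖ := by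
      have := congrArg Complex.re hval
      simpa using this
    have hle2 : (fs n (T (xs n))).re ≤ ‖T‖ := by
      calc (fs n (T (xs n))).re ≤ ‖fs n (T (xs n))‖ := Complex.re_le_norm _
      _ = ‖fs n (T (xs n))‖ := rfl
      _ ≤ ‖fs n‖ * ‖T (xs n)‖ := (fs n).le_opNorm _
      _ = ‖T (xs n)‖ := by rw [hfs1 n, one_mul]
      _ ≤ ‖T‖ * ‖xs n‖ := T.le_opNorm _
      _ = ‖T‖ := by rw [hxs1 n, mul_one]
    have h0 : 0 ≤ (lam n * fs n (S (xs n))).re := by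
      have := hAn n
      linarith
    have heq : (lam n * fs n (S (xs n))).re = t n * (d * fs n (S (xs n))).re := by
      rw [hlam]
      simp only [mul_assoc]
      exact Complex.re_ofReal_mul _ _
    rw [heq] at h0
    have := htpos n
    nlinarith
  refine ⟨x, f, hx1, hTx, hf1, hfTx, ?_⟩
  have hSev : Tendsto (fun n => fs (φ n) (S (xs (φ n)))) atTop (𝓝 (f (S x))) :=
    (happly.tendsto (f, S x)).comp (htf.prodMk_nhds ((S.continuous.tendsto x).comp htx))
  have hre : Tendsto (fun n => (d * fs (φ n) (S (xs (φ n)))).re) atTop (𝓝 ((d * f (S x)).re)) :=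
    (Complex.continuous_re.tendsto _).comp ((hSev.const_mul d))
  exact ge_of_tendsto hre (Eventually.of_forall fun n => key (φ n))


/-- For finite-dimensional complex Banach spaces, `T ⊥_B S` iff
`0` lies in the convex hull of `{f(Sx) : x ∈ M_T, f a norm-one support
functional of Tx}`. -/
theorem stmt18 {X Y : Type*} [NormedAddCommGroup X] [NormedSpace ℂ X] [FiniteDimensional ℂ X]
    [NormedAddCommGroup Y] [NormedSpace ℂ Y] [FiniteDimensional ℂ Y]
    (T S : X →L[ℂ] Y) (hT : T ≠ 0) :
    (∀ lam : ℂ, ‖T + lam • S‖ ≥ ‖T‖) ↔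
      (0 : ℂ) ∈ convexHull ℝ
        {c : ℂ | ∃ (x : X) (f : Y →L[ℂ] ℂ), ‖x‖ = 1 ∧ ‖T x‖ = ‖T‖ ∧
          ‖f‖ = 1 ∧ f (T x) = (‖T x‖ : ℂ) ∧ c = f (S x)} := by
  set K : Set ℂ := {c : ℂ | ∃ (x : X) (f : Y →L[ℂ] ℂ), ‖x‖ = 1 ∧ ‖T x‖ = ‖T‖ ∧
      ‖f‖ = 1 ∧ f (T x) = (‖T x‖ : ℂ) ∧ c = f (S x)} with hK
  have happly : Continuous fun p : (Y →L[ℂ] ℂ) × Y => p.1 p.2 :=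
    isBoundedBilinearMap_apply.continuous
  constructor
  · -- forward direction
    intro h
    by_contra h0
    -- K is compact
    have hKc : IsCompact K := by
      set P : Set (X × (Y →L[ℂ] ℂ)) := {p | ‖p.1‖ = 1 ∧ ‖T p.1‖ = ‖T‖ ∧ ‖p.2‖ = 1 ∧
        p.2 (T p.1) = (‖T p.1‖ : ℂ)} with hP
      have hPclosed : IsClosed P := by
        refine IsClosed.inter (isClosed_eq continuous_fst.norm continuous_const)
          (IsClosed.inter (isClosed_eq (T.continuous.comp continuous_fst).norm continuous_const)
            (IsClosed.inter (isClosed_eq continuous_snd.norm continuous_const)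
              (isClosed_eq (happly.comp
                  (continuous_snd.prodMk (T.continuous.comp continuous_fst)))
                (Complex.continuous_ofReal.comp
                  (T.continuous.comp continuous_fst).norm))))
      have hPsub : P ⊆ sphere (0:X) 1 ×ˢ closedBall (0 : Y →L[ℂ] ℂ) 1 := by
        rintro ⟨x, f⟩ ⟨h1, _, h3, _⟩
        exact ⟨mem_sphere_zero_iff_norm.mpr h1, mem_closedBall_zero_iff.mpr h3.le⟩
      have hPc : IsCompact P :=
        ((isCompact_sphere 0 1).prod (isCompact_closedBall 0 1)).of_isClosed_subset
          hPclosed hPsub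
      have hKim : K = (fun p : X × (Y →L[ℂ] ℂ) => p.2 (S p.1)) '' P := by
        ext c
        constructor
        · rintro ⟨x, f, h1, h2, h3, h4, rfl⟩
          exact ⟨(x, f), ⟨h1, h2, h3, h4⟩, rfl⟩
        · rintro ⟨⟨x, f⟩, ⟨h1, h2, h3, h4⟩, rfl⟩
          exact ⟨x, f, h1, h2, h3, h4, rfl⟩
      rw [hKim]
      exact hPc.image (happly.comp (continuous_snd.prodMk (S.continuous.comp continuous_fst)))
    obtain ⟨φ, u, hφu, hu0⟩ :=
      geometric_hahn_banach_closed_point (convex_convexHull ℝ K) (closed_hull hKc) h0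
    have hu0' : u < 0 := by simpa using hu0
    set d : ℂ := ((φ 1 : ℝ) : ℂ) - ((φ Complex.I : ℝ) : ℂ) * Complex.I with hd
    have hφeq : ∀ c : ℂ, φ c = (d * c).re := by
      intro c
      have h1 : φ c = c.re * φ 1 + c.im * φ Complex.I := by
        conv_lhs => rw [← Complex.re_add_im c]
        rw [show ((c.re : ℂ) + (c.im : ℂ) * Complex.I) =
            c.re • (1:ℂ) + c.im • Complex.I by simp [Complex.real_smul]]
        rw [map_add, map_smul, map_smul]
        simp [smul_eq_mul]
      rw [h1, hd]
      simp only [Complex.mul_re, Complex.sub_re, Complex.sub_im, Complex.ofReal_re,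
        Complex.ofReal_im, Complex.mul_im, Complex.I_re, Complex.I_im]
      ring
    obtain ⟨x, f, hx1, hTx, hf1, hfTx, hre⟩ := claim_aux T S hT h d
    have hcK : f (S x) ∈ K := ⟨x, f, hx1, hTx, hf1, hfTx, rfl⟩
    have hlt := hφu _ (subset_convexHull ℝ K hcK)
    rw [hφeq] at hlt
    linarith
  · -- backward direction
    intro h0 lam
    have hex : ∃ c ∈ K, 0 ≤ (lam * c).re := by
      by_contra hc
      push_neg at hc
      have hlin : IsLinearMap ℝ (fun c : ℂ => (lam * c).re) := by
        constructor
        · intro a b; simp [mul_add]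
        · intro r a
          rw [Complex.real_smul, show lam * ((r:ℂ) * a) = (r:ℂ) * (lam * a) by ring,
            Complex.re_ofReal_mul]
          simp [smul_eq_mul]
      have hconv : Convex ℝ {c : ℂ | (lam * c).re < 0} := convex_halfSpace_lt hlin 0
      have hsub : convexHull ℝ K ⊆ {c : ℂ | (lam * c).re < 0} :=
        convexHull_min (fun c hcK => by simpa using hc c hcK) hconv
      have := hsub h0
      simp at this
    obtain ⟨c, ⟨x, f, hx1, hTx, hf1, hfTx, rfl⟩, hre⟩ := hex
    have key : ‖T‖ ≤ ‖T + lam • S‖ := by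
      have hval : f ((T + lam • S) x) = (‖T x‖ : ℂ) + lam * f (S x) := by
        rw [show (T + lam • S) x = T x + lam • S x by
          simp [ContinuousLinearMap.add_apply, ContinuousLinearMap.smul_apply]]
        rw [map_add, map_smul, smul_eq_mul, hfTx]
      calc ‖T‖ = ‖T x‖ := hTx.symm
      _ ≤ ‖T x‖ + (lam * f (S x)).re := le_add_of_nonneg_right hre
      _ ≤ ‖(‖T x‖ : ℂ) + lam * f (S x)‖ := by
          have h2 := Complex.re_le_norm ((‖T x‖ : ℂ) + lam * f (S x))
          simpa using h2
      _ = ‖f ((T + lam • S) x)‖ := by rw [hval]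
      _ ≤ ‖(T + lam • S) x‖ := by simpa [hf1] using f.le_opNorm ((T + lam • S) x)
      _ ≤ ‖T + lam • S‖ := by simpa [hx1] using (T + lam • S).le_opNorm x
    exact key
end
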